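/- arXiv:2210.14050 — 7 statements merged into one kernel-verified Lean document; each statement's English description precedes it below -/
import Mathlib

section
/- Let Ω be a bounded smooth domain in ℝ^N, and let (u,v) be a classical solution on [0,T) of the system u_t = J*u − u + u^α v^p, v_t = Δv + u^q v^β in Ω×(0,T) with u = 0 on (ℝ^N∖Ω)×(0,T), v = 0 on ∂Ω×(0,T), and nonnegative continuous initial data. If α < 1, β < 1 and pq ≤ (1−α)(1−β), then the solution does not blow up in finite time: for every finite T' ≤ T, sup over Ω×[0,T') of max(u,v) is finite. -/
open MeasureTheory Real Set Filter Topology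

noncomputable def convol {N : ℕ} (J u : EuclideanSpace ℝ (Fin N) → ℝ)
    (x : EuclideanSpace ℝ (Fin N)) : ℝ :=
  ∫ y, J (x - y) * u y

noncomputable def lap {N : ℕ} (f : EuclideanSpace ℝ (Fin N) → ℝ)
    (x : EuclideanSpace ℝ (Fin N)) : ℝ :=
  ∑ i : Fin N, fderiv ℝ (fun y => fderiv ℝ f y (EuclideanSpace.single i 1)) x
    (EuclideanSpace.single i 1)

/-- `(u, v)` is a (classical) solution of the system `u_t = J*u - u + u^α v^p`,
`v_t = Δ v + u^q v^β` in `Ω × (0,T)` with Dirichlet conditions `u = 0` outside `Ω`,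
`v = 0` on `∂Ω`, and initial data `(u₀, v₀)`. -/
def IsSol {N : ℕ} (Ω : Set (EuclideanSpace ℝ (Fin N))) (J : EuclideanSpace ℝ (Fin N) → ℝ)
    (α β p q : ℝ) (u v : EuclideanSpace ℝ (Fin N) → ℝ → ℝ)
    (u₀ v₀ : EuclideanSpace ℝ (Fin N) → ℝ) (T : ℝ) : Prop :=
  (∀ x t, 0 ≤ u x t) ∧ (∀ x t, 0 ≤ v x t) ∧
  ContinuousOn (fun pr : EuclideanSpace ℝ (Fin N) × ℝ => u pr.1 pr.2)
    (Set.univ ×ˢ Set.Ico 0 T) ∧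
  ContinuousOn (fun pr : EuclideanSpace ℝ (Fin N) × ℝ => v pr.1 pr.2)
    (closure Ω ×ˢ Set.Ico 0 T) ∧
  (∀ t ∈ Set.Ioo (0:ℝ) T, ContDiffOn ℝ 2 (fun x => v x t) Ω) ∧
  (∀ x ∈ Ω, ∀ t ∈ Set.Ioo (0:ℝ) T,
    HasDerivAt (fun s => u x s)
      (convol J (fun y => u y t) x - u x t + u x t ^ α * v x t ^ p) t) ∧
  (∀ x ∈ Ω, ∀ t ∈ Set.Ioo (0:ℝ) T,
    HasDerivAt (fun s => v x s) (lap (fun y => v y t) x + u x t ^ q * v x t ^ β) t) ∧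
  (∀ x, x ∉ Ω → ∀ t ∈ Set.Ico (0:ℝ) T, u x t = 0) ∧
  (∀ x ∈ frontier Ω, ∀ t ∈ Set.Ico (0:ℝ) T, v x t = 0) ∧
  (∀ x, u x 0 = u₀ x) ∧ (∀ x, v x 0 = v₀ x)

lemma aux_left_deriv_nonneg {g : ℝ → ℝ} {d a t : ℝ} (hat : a < t)
    (hd : HasDerivAt g d t) (h : ∀ s, a ≤ s → s < t → g s < g t) : 0 ≤ d := by
  have hslope : Tendsto (slope g t) (𝓝[<] t) (𝓝 d) := by
    have := hasDerivAt_iff_tendsto_slope.mp hd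
    exact this.mono_left (nhdsWithin_mono _ (fun s hs => ne_of_lt hs))
  refine ge_of_tendsto hslope ?_
  have hmem : Set.Ioi a ∈ 𝓝[<] t := mem_nhdsWithin_of_mem_nhds (Ioi_mem_nhds hat)
  filter_upwards [hmem, self_mem_nhdsWithin] with s hs1 hs2
  have hst : s < t := hs2
  have h1 : g s - g t < 0 := by have := h s (le_of_lt hs1) hst; linarith
  have hden : s - t < 0 := by linarith
  rw [slope_def_field]
  exact le_of_lt (div_pos_of_neg_of_neg h1 hden)

/-- Second derivative test: if `g` is differentiable near `0` with derivative `g'`,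
`g'` has derivative `d` at `0`, and `g` has a local max at `0`, then `d ≤ 0`. -/
lemma aux_second_deriv_nonpos {g g' : ℝ → ℝ} {d : ℝ}
    (hg : ∀ᶠ s in 𝓝 (0:ℝ), HasDerivAt g (g' s) s)
    (hg' : HasDerivAt g' d 0) (hmax : ∀ᶠ s in 𝓝 (0:ℝ), g s ≤ g 0) : d ≤ 0 := by
  by_contra hd
  push_neg at hd
  have hmax' : IsLocalMax g 0 := hmax
  have hg'0 : g' 0 = 0 := by
    have := hmax'.deriv_eq_zero
    rwa [(hg.self_of_nhds).deriv] at this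
  -- slopes of g' tend to d > 0
  have hslope : Tendsto (slope g' 0) (𝓝[≠] (0:ℝ)) (𝓝 d) :=
    hasDerivAt_iff_tendsto_slope.mp hg'
  have hev : ∀ᶠ s in 𝓝[≠] (0:ℝ), 0 < slope g' 0 s :=
    hslope.eventually (eventually_gt_nhds hd)
  rw [eventually_nhdsWithin_iff] at hev
  have hall : ∀ᶠ s in 𝓝 (0:ℝ), (HasDerivAt g (g' s) s ∧ g s ≤ g 0)
      ∧ (s ∈ ({0}ᶜ : Set ℝ) → 0 < slope g' 0 s) := (hg.and hmax).and hev
  rcases Metric.eventually_nhds_iff.mp hall with ⟨ε, hε, hball⟩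
  set δ := ε / 2 with hδ
  have hδ0 : 0 < δ := by positivity
  have hsub : ∀ s ∈ Set.Icc (0:ℝ) δ, (HasDerivAt g (g' s) s ∧ g s ≤ g 0)
      ∧ (s ∈ ({0}ᶜ : Set ℝ) → 0 < slope g' 0 s) := by
    intro s hs
    apply hball
    rw [Real.dist_eq]
    have := hs.1; have := hs.2
    rw [abs_of_nonneg (by simpa using hs.1)]
    simp only [sub_zero]
    calc s ≤ δ := hs.2
    _ < ε := by simp [hδ]; linarith
  have hmono : StrictMonoOn g (Set.Icc 0 δ) := by
    apply strictMonoOn_of_deriv_pos (convex_Icc 0 δ)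
    · intro s hs
      exact ((hsub s hs).1.1).continuousAt.continuousWithinAt
    · intro s hs
      rw [interior_Icc] at hs
      have h1 := (hsub s ⟨hs.1.le, hs.2.le⟩).1.1
      rw [h1.deriv]
      have h2 := (hsub s ⟨hs.1.le, hs.2.le⟩).2 (by simp [ne_of_gt hs.1])
      rw [slope_def_field, hg'0] at h2
      have : 0 < g' s / s := by simpa using h2
      have hs0 : 0 < s := hs.1
      by_contra hcon
      push_neg at hcon
      nlinarith [div_nonpos_of_nonpos_of_nonneg hcon hs0.le]
  have := hmono (Set.left_mem_Icc.mpr hδ0.le) (Set.right_mem_Icc.mpr hδ0.le) hδ0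
  have := (hsub δ (Set.right_mem_Icc.mpr hδ0.le)).1.2
  linarith

lemma aux_lap_nonpos {N : ℕ} {Ω : Set (EuclideanSpace ℝ (Fin N))} (hΩo : IsOpen Ω)
    {f : EuclideanSpace ℝ (Fin N) → ℝ} (hf : ContDiffOn ℝ 2 f Ω)
    {x₀ : EuclideanSpace ℝ (Fin N)} (hx₀ : x₀ ∈ Ω)
    (hmax : ∀ᶠ y in 𝓝 x₀, f y ≤ f x₀) : lap f x₀ ≤ 0 := by
  apply Finset.sum_nonpos
  intro i _
  set e : EuclideanSpace ℝ (Fin N) := EuclideanSpace.single i 1 with he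
  -- the line through x₀ in direction e
  set Lf : ℝ → EuclideanSpace ℝ (Fin N) := fun s => x₀ + s • e with hLf
  have hL0 : Lf 0 = x₀ := by simp [hLf]
  have hLc : Continuous Lf := by continuity
  have hLd : ∀ s : ℝ, HasDerivAt Lf e s := by
    intro s
    have h1 : HasDerivAt (fun s : ℝ => s • e) ((1:ℝ) • e) s :=
      (hasDerivAt_id s).smul_const e
    simpa [hLf] using h1.const_add x₀
  -- differentiability facts
  have hfd : DifferentiableOn ℝ f Ω := hf.differentiableOn (by norm_num)
  have hf' : ContDiffOn ℝ 1 (fderiv ℝ f) Ω := hf.fderiv_of_isOpen hΩo (by norm_num)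
  have hf'd : DifferentiableOn ℝ (fderiv ℝ f) Ω := hf'.differentiableOn (by norm_num)
  -- g and g'
  set g : ℝ → ℝ := fun s => f (Lf s) with hg
  set g' : ℝ → ℝ := fun s => fderiv ℝ f (Lf s) e with hg'
  -- the derivative candidate
  have hf'x₀ : DifferentiableAt ℝ (fderiv ℝ f) x₀ :=
    (hf'd x₀ hx₀).differentiableAt (hΩo.mem_nhds hx₀)
  have happ : HasFDerivAt (fun y => fderiv ℝ f y e)
      ((ContinuousLinearMap.apply ℝ ℝ e).comp (fderiv ℝ (fderiv ℝ f) x₀)) x₀ :=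
    (ContinuousLinearMap.apply ℝ ℝ e).hasFDerivAt.comp x₀ hf'x₀.hasFDerivAt
  have hd : fderiv ℝ (fun y => fderiv ℝ f y e) x₀ e
      = ((ContinuousLinearMap.apply ℝ ℝ e).comp (fderiv ℝ (fderiv ℝ f) x₀)) e := by
    rw [happ.fderiv]
  rw [hd]
  set d : ℝ := ((ContinuousLinearMap.apply ℝ ℝ e).comp (fderiv ℝ (fderiv ℝ f) x₀)) e with hdd
  -- apply the second derivative test
  have hnhds : ∀ᶠ s in 𝓝 (0:ℝ), Lf s ∈ Ω := by
    have : Ω ∈ 𝓝 (Lf 0) := hΩo.mem_nhds (by rwa [hL0])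
    exact hLc.continuousAt.eventually_mem this
  apply aux_second_deriv_nonpos (g := g) (g' := g')
  · filter_upwards [hnhds] with s hs
    have hfs : DifferentiableAt ℝ f (Lf s) :=
      (hfd (Lf s) hs).differentiableAt (hΩo.mem_nhds hs)
    exact hfs.hasFDerivAt.comp_hasDerivAt s (hLd s)
  · have happ' : HasFDerivAt (fun y => fderiv ℝ f y e)
        ((ContinuousLinearMap.apply ℝ ℝ e).comp (fderiv ℝ (fderiv ℝ f) x₀)) (Lf 0) := by
      rwa [hL0]
    exact happ'.comp_hasDerivAt 0 (hLd 0)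
  · filter_upwards [hLc.continuousAt.eventually (by rw [hL0]; exact hmax)] with s hs
    simpa [hg, hL0] using hs

lemma aux_convol_le {N : ℕ} {J w : EuclideanSpace ℝ (Fin N) → ℝ}
    (hJc : Continuous J) (hJs : HasCompactSupport J) (hJnn : ∀ x, 0 ≤ J x)
    (hJ1 : ∫ x, J x = 1) (hw : Continuous w) {C : ℝ}
    (hwC : ∀ y, w y ≤ C) (hwnn : ∀ y, 0 ≤ w y) (x : EuclideanSpace ℝ (Fin N)) :
    convol J w x ≤ C := by
  have hJx : Continuous (fun y => J (x - y)) := hJc.comp (continuous_const.sub continuous_id)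
  have hJxs : HasCompactSupport (fun y => J (x - y)) :=
    hJs.comp_homeomorph (Homeomorph.subLeft x)
  have hint1 : Integrable (fun y => J (x - y) * w y) := by
    exact (hJx.mul hw).integrable_of_hasCompactSupport (hJxs.mul_right)
  have hint2 : Integrable (fun y => J (x - y) * C) := by
    exact (hJx.mul continuous_const).integrable_of_hasCompactSupport (hJxs.mul_right)
  have hmono : ∫ y, J (x - y) * w y ≤ ∫ y, J (x - y) * C := by
    apply integral_mono hint1 hint2
    intro y
    exact mul_le_mul_of_nonneg_left (hwC y) (hJnn _)
  have heq : ∫ y, J (x - y) * C = C := by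
    rw [integral_mul_const]
    rw [MeasureTheory.integral_sub_left_eq_self J volume x, hJ1, one_mul]
  calc convol J w x = ∫ y, J (x - y) * w y := rfl
  _ ≤ ∫ y, J (x - y) * C := hmono
  _ = C := heq

set_option maxHeartbeats 1000000 in
/-- If `α < 1`, `β < 1` and `pq ≤ (1-α)(1-β)`, then the solution does not blow up in
finite time: on every `Ω × [0, T')` with `T' ≤ T`, `max u v` is bounded. -/
theorem stmt0
    {N : ℕ} (Ω : Set (EuclideanSpace ℝ (Fin N)))
    (hΩo : IsOpen Ω) (hΩb : Bornology.IsBounded Ω) (hΩne : Ω.Nonempty)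
    (J : EuclideanSpace ℝ (Fin N) → ℝ) (hJc : Continuous J) (hJs : HasCompactSupport J)
    (hJnn : ∀ x, 0 ≤ J x) (hJ0 : 0 < J 0) (hJ1 : ∫ x, J x = 1)
    (α β p q : ℝ) (hp : 0 < p) (hq : 0 < q) (hα : 0 ≤ α) (hβ : 0 ≤ β)
    (u v : EuclideanSpace ℝ (Fin N) → ℝ → ℝ) (u₀ v₀ : EuclideanSpace ℝ (Fin N) → ℝ)
    (hu₀c : Continuous u₀) (hv₀c : Continuous v₀)
    (hu₀ : ∀ x, 0 ≤ u₀ x) (hv₀ : ∀ x, 0 ≤ v₀ x)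
    (T : ℝ) (hT : 0 < T) (hsol : IsSol Ω J α β p q u v u₀ v₀ T)
    (h1 : α < 1) (h2 : β < 1) (h3 : p * q ≤ (1 - α) * (1 - β)) :
    ∀ T' : ℝ, T' ≤ T → ∃ M : ℝ, ∀ x ∈ Ω, ∀ t : ℝ, 0 ≤ t → t < T' →
      max (u x t) (v x t) ≤ M := by
  obtain ⟨hun, hvn, huc, hvc, hvC2, hue, hve, huo, hvbd, hui, hvi⟩ := hsol
  set K : Set (EuclideanSpace ℝ (Fin N)) := closure Ω with hK
  have hKc : IsCompact K := Metric.isCompact_of_isClosed_isBounded isClosed_closure hΩb.closure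
  have hKne : K.Nonempty := hΩne.mono subset_closure
  have hΩK : Ω ⊆ K := subset_closure
  -- bounds for initial data
  obtain ⟨Cu, hCu⟩ := hKc.exists_bound_of_continuousOn hu₀c.continuousOn
  obtain ⟨Cv, hCv⟩ := hKc.exists_bound_of_continuousOn hv₀c.continuousOn
  have hCu0 : 0 ≤ Cu := le_trans (norm_nonneg _) (hCu _ hKne.some_mem)
  have hCv0 : 0 ≤ Cv := le_trans (norm_nonneg _) (hCv _ hKne.some_mem)
  have h1α : (0:ℝ) < 1 - α := by linarith
  have h2β : (0:ℝ) < 1 - β := by linarith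
  -- constants of the exponential supersolution
  set c : ℝ := 1/p + 1/(1-α) + 1 with hc
  have hc0 : 0 < c := by positivity
  have hcp : 1 < c * p := by
    rw [hc]
    have h' : (1/p + 1/(1-α) + 1) * p = 1 + (1/(1-α) + 1) * p := by field_simp; ring
    nlinarith [mul_pos (show (0:ℝ) < 1/(1-α) + 1 by positivity) hp]
  have hcα : 1 < c * (1-α) := by
    rw [hc]
    have h' : (1/p + 1/(1-α) + 1) * (1-α) = 1 + (1/p + 1) * (1-α) := by field_simp; ring
    nlinarith [mul_pos (show (0:ℝ) < 1/p + 1 by positivity) h1α]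
  set L : ℝ := c * p with hLdef
  set Me : ℝ := c * (1-α) with hMedef
  have hL0 : 0 < L := by positivity
  have hMe0 : 0 < Me := by positivity
  have hexp1 : α * L + p * Me ≤ L := by rw [hLdef, hMedef]; ring_nf; nlinarith
  have hexp2 : q * L + β * Me ≤ Me := by
    rw [hLdef, hMedef]
    nlinarith
  set K₀ : ℝ := max 1 (max ((Cu+1) ^ (1/p)) ((Cv+1) ^ (1/(1-α)))) with hK₀def
  have hK₀1 : (1:ℝ) ≤ K₀ := le_max_left _ _
  have hK₀0 : (0:ℝ) < K₀ := lt_of_lt_of_le one_pos hK₀1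
  set A : ℝ := K₀ ^ p with hAdef
  set B : ℝ := K₀ ^ (1-α) with hBdef
  have hA1 : (1:ℝ) ≤ A := Real.one_le_rpow hK₀1 hp.le
  have hB1 : (1:ℝ) ≤ B := Real.one_le_rpow hK₀1 h1α.le
  have hA0 : (0:ℝ) < A := lt_of_lt_of_le one_pos hA1
  have hB0 : (0:ℝ) < B := lt_of_lt_of_le one_pos hB1
  have hCuA : Cu < A := by
    have h' : (Cu+1) ^ (1/p) ≤ K₀ := le_trans (le_max_left _ _) (le_max_right _ _)
    have h2' : ((Cu+1) ^ (1/p)) ^ p ≤ K₀ ^ p :=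
      Real.rpow_le_rpow (Real.rpow_nonneg (by linarith) _) h' hp.le
    rw [← Real.rpow_mul (by linarith), one_div_mul_cancel hp.ne', Real.rpow_one] at h2'
    rw [hAdef]; linarith
  have hCvB : Cv < B := by
    have h' : (Cv+1) ^ (1/(1-α)) ≤ K₀ := le_trans (le_max_right _ _) (le_max_right _ _)
    have h2' : ((Cv+1) ^ (1/(1-α))) ^ (1-α) ≤ K₀ ^ (1-α) :=
      Real.rpow_le_rpow (Real.rpow_nonneg (by linarith) _) h' h1α.le
    rw [← Real.rpow_mul (by linarith), one_div_mul_cancel h1α.ne', Real.rpow_one] at h2'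
    rw [hBdef]; linarith
  -- coefficient inequalities for the supersolution
  have hAαBp : A ^ α * B ^ p = A := by
    rw [hAdef, hBdef, ← Real.rpow_mul hK₀0.le, ← Real.rpow_mul hK₀0.le,
      ← Real.rpow_add hK₀0]
    congr 1; ring
  have hAqBβ : A ^ q * B ^ β ≤ B := by
    rw [hAdef, hBdef, ← Real.rpow_mul hK₀0.le, ← Real.rpow_mul hK₀0.le,
      ← Real.rpow_add hK₀0]
    apply Real.rpow_le_rpow_of_exponent_le hK₀1
    nlinarith
  have hsup1 : A ^ α * B ^ p < L * A := by
    rw [hAαBp]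
    have h' := mul_lt_mul_of_pos_right hcp hA0
    linarith
  have hsup2 : A ^ q * B ^ β < Me * B := by
    have h' := mul_lt_mul_of_pos_right hcα hB0
    calc A ^ q * B ^ β ≤ B := hAqBβ
    _ < Me * B := by linarith
  -- the supersolutions
  set U : ℝ → ℝ := fun t => A * Real.exp (L * t) with hU
  set V : ℝ → ℝ := fun t => B * Real.exp (Me * t) with hV
  have hU0 : ∀ t, 0 < U t := fun t => mul_pos hA0 (Real.exp_pos _)
  have hV0 : ∀ t, 0 < V t := fun t => mul_pos hB0 (Real.exp_pos _)
  have hUA : ∀ t, 0 ≤ t → A ≤ U t := by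
    intro t ht
    have h1' : 1 ≤ Real.exp (L * t) := Real.one_le_exp (by positivity)
    calc A = A * 1 := (mul_one A).symm
    _ ≤ A * Real.exp (L * t) := mul_le_mul_of_nonneg_left h1' hA0.le
  have hVB : ∀ t, 0 ≤ t → B ≤ V t := by
    intro t ht
    have h1' : 1 ≤ Real.exp (Me * t) := Real.one_le_exp (by positivity)
    calc B = B * 1 := (mul_one B).symm
    _ ≤ B * Real.exp (Me * t) := mul_le_mul_of_nonneg_left h1' hB0.le
  have hUd : ∀ t, HasDerivAt U (L * A * Real.exp (L * t)) t := by
    intro t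
    have h' : HasDerivAt (fun t : ℝ => L * t) L t := by
      simpa using (hasDerivAt_id t).const_mul L
    have := (h'.exp).const_mul A
    exact this.congr_deriv (by ring)
  have hVd : ∀ t, HasDerivAt V (Me * B * Real.exp (Me * t)) t := by
    intro t
    have h' : HasDerivAt (fun t : ℝ => Me * t) Me t := by
      simpa using (hasDerivAt_id t).const_mul Me
    have := (h'.exp).const_mul B
    exact this.congr_deriv (by ring)
  have hUc : Continuous U :=
    continuous_const.mul (Real.continuous_exp.comp (continuous_const.mul continuous_id))
  have hVc : Continuous V :=
    continuous_const.mul (Real.continuous_exp.comp (continuous_const.mul continuous_id))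
  -- the key claim
  have key : ∀ t, 0 ≤ t → t < T → (∀ x, u x t < U t) ∧ (∀ x ∈ K, v x t < V t) := by
    by_contra hcon
    push_neg at hcon
    obtain ⟨t₀, ht₀0, ht₀T, hbad⟩ := hcon
    -- the contact set
    set h : EuclideanSpace ℝ (Fin N) × ℝ → ℝ :=
      fun z => max (u z.1 z.2 - U z.2) (v z.1 z.2 - V z.2) with hh
    set E : Set (EuclideanSpace ℝ (Fin N) × ℝ) :=
      (K ×ˢ Set.Icc 0 t₀) ∩ {z | 0 ≤ h z} with hEdef
    have hsub1 : (K ×ˢ Set.Icc 0 t₀ : Set _) ⊆ Set.univ ×ˢ Set.Ico 0 T := by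
      rintro ⟨x, t⟩ ⟨hx, ht⟩
      exact ⟨trivial, ⟨ht.1, lt_of_le_of_lt ht.2 ht₀T⟩⟩
    have hsub2 : (K ×ˢ Set.Icc 0 t₀ : Set _) ⊆ K ×ˢ Set.Ico 0 T := by
      rintro ⟨x, t⟩ ⟨hx, ht⟩
      exact ⟨hx, ⟨ht.1, lt_of_le_of_lt ht.2 ht₀T⟩⟩
    have hhc : ContinuousOn h (K ×ˢ Set.Icc 0 t₀) := by
      have h1' : ContinuousOn (fun z : EuclideanSpace ℝ (Fin N) × ℝ => u z.1 z.2 - U z.2)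
          (K ×ˢ Set.Icc 0 t₀) := (huc.mono hsub1).sub ((hUc.comp continuous_snd).continuousOn)
      have h2' : ContinuousOn (fun z : EuclideanSpace ℝ (Fin N) × ℝ => v z.1 z.2 - V z.2)
          (K ×ˢ Set.Icc 0 t₀) := (hvc.mono hsub2).sub ((hVc.comp continuous_snd).continuousOn)
      exact fun z hz => ((h1' z hz).max (h2' z hz))
    have hEclosed : IsClosed E := by
      have h' := hhc.preimage_isClosed_of_isClosed (hKc.isClosed.prod isClosed_Icc)
        (isClosed_Ici (a := (0:ℝ)))
      exact h'
    have hEcpt : IsCompact E :=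
      (hKc.prod isCompact_Icc).of_isClosed_subset hEclosed Set.inter_subset_left
    have hEne : E.Nonempty := by
      by_cases hucase : ∀ x, u x t₀ < U t₀
      · obtain ⟨x₁, hx₁K, hx₁v⟩ := hbad hucase
        have h' : (0:ℝ) ≤ v x₁ t₀ - V t₀ := by linarith
        exact ⟨(x₁, t₀), ⟨⟨hx₁K, ⟨ht₀0, le_refl _⟩⟩, le_max_of_le_right h'⟩⟩
      · push_neg at hucase
        obtain ⟨x₁, hx₁⟩ := hucase
        have hx₁Ω : x₁ ∈ Ω := by
          by_contra hxo
          have h0 := huo x₁ hxo t₀ ⟨ht₀0, ht₀T⟩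
          have := hUA t₀ ht₀0
          rw [h0] at hx₁
          linarith
        have h' : (0:ℝ) ≤ u x₁ t₀ - U t₀ := by linarith
        exact ⟨(x₁, t₀), ⟨⟨hΩK hx₁Ω, ⟨ht₀0, le_refl _⟩⟩, le_max_of_le_left h'⟩⟩
    -- first contact time
    have hsndcpt : IsCompact (Prod.snd '' E) := hEcpt.image continuous_snd
    have hmem := hsndcpt.sInf_mem (hEne.image _)
    set tstar : ℝ := sInf (Prod.snd '' E) with htstardef
    obtain ⟨⟨x₁, t₁⟩, hzE, hsnd⟩ := hmem
    have ht₁ : t₁ = tstar := hsnd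
    subst ht₁
    have hlb : ∀ z ∈ E, tstar ≤ z.2 := fun z hz =>
      csInf_le hsndcpt.bddBelow (Set.mem_image_of_mem _ hz)
    have hx₁K : x₁ ∈ K := hzE.1.1
    have htstar0 : 0 ≤ tstar := hzE.1.2.1
    have htstart₀ : tstar ≤ t₀ := hzE.1.2.2
    have htstarT : tstar < T := lt_of_le_of_lt htstart₀ ht₀T
    have hcontact : 0 ≤ max (u x₁ tstar - U tstar) (v x₁ tstar - V tstar) := hzE.2
    -- before the contact time, strict inequalities hold
    have hbefore_u : ∀ s, 0 ≤ s → s < tstar → ∀ x, u x s < U s := by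
      intro s hs0 hst x
      by_contra hcon2
      push_neg at hcon2
      have hxΩ : x ∈ Ω := by
        by_contra hxo
        have h0 := huo x hxo s ⟨hs0, lt_trans hst htstarT⟩
        have := hUA s hs0
        rw [h0] at hcon2
        linarith
      have h' : (0:ℝ) ≤ u x s - U s := by linarith
      have hzE' : (x, s) ∈ E :=
        ⟨⟨hΩK hxΩ, ⟨hs0, le_trans hst.le htstart₀⟩⟩, le_max_of_le_left h'⟩
      exact absurd (hlb _ hzE') (not_le.mpr hst)
    have hbefore_v : ∀ s, 0 ≤ s → s < tstar → ∀ x ∈ K, v x s < V s := by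
      intro s hs0 hst x hxK
      by_contra hcon2
      push_neg at hcon2
      have h' : (0:ℝ) ≤ v x s - V s := by linarith
      have hzE' : (x, s) ∈ E :=
        ⟨⟨hxK, ⟨hs0, le_trans hst.le htstart₀⟩⟩, le_max_of_le_right h'⟩
      exact absurd (hlb _ hzE') (not_le.mpr hst)
    -- the contact time is positive
    have htstar_pos : 0 < tstar := by
      rcases eq_or_lt_of_le htstar0 with heq | hlt
      · exfalso
        have hU0' : U 0 = A := by rw [hU]; simp
        have hV0' : V 0 = B := by rw [hV]; simp
        have hub : u x₁ 0 ≤ Cu := by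
          by_cases hxΩ : x₁ ∈ Ω
          · rw [hui]
            exact le_trans (le_abs_self _) (hCu x₁ hx₁K)
          · rw [huo x₁ hxΩ 0 ⟨le_refl _, hT⟩]; exact hCu0
        have hvb : v x₁ 0 ≤ Cv := by
          rw [hvi]
          exact le_trans (le_abs_self _) (hCv x₁ hx₁K)
        rw [← heq] at hcontact
        rcases le_max_iff.mp hcontact with hc1 | hc1
        · rw [hU0'] at hc1; linarith
        · rw [hV0'] at hc1; linarith
      · exact hlt
    -- limits from the left: weak inequalities at the contact time
    have hIoo : 𝓝[Set.Iio tstar] tstar = 𝓝[Set.Ioo 0 tstar] tstar := by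
      rw [← Set.Ioi_inter_Iio, Set.inter_comm]
      exact (nhdsWithin_inter_of_mem'
        (mem_nhdsWithin_of_mem_nhds (Ioi_mem_nhds htstar_pos))).symm
    have hIooSub : Set.Ioo (0:ℝ) tstar ⊆ Set.Ico 0 T :=
      fun s hs => ⟨hs.1.le, lt_trans hs.2 htstarT⟩
    have hatu : ∀ x, u x tstar ≤ U tstar := by
      intro x
      have hcw : ContinuousWithinAt (fun s => u x s) (Set.Ico 0 T) tstar := by
        have h1' : ContinuousWithinAt (fun pr : EuclideanSpace ℝ (Fin N) × ℝ => u pr.1 pr.2)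
            (Set.univ ×ˢ Set.Ico 0 T) (x, tstar) := huc _ ⟨trivial, ⟨htstar0, htstarT⟩⟩
        exact h1'.comp ((continuous_const.prodMk continuous_id).continuousWithinAt)
          (fun s hs => ⟨trivial, hs⟩)
      have htt : Tendsto (fun s => u x s) (𝓝[<] tstar) (𝓝 (u x tstar)) := by
        rw [hIoo]
        exact hcw.tendsto.mono_left (nhdsWithin_mono _ hIooSub)
      have hUt : Tendsto U (𝓝[<] tstar) (𝓝 (U tstar)) :=
        (hUc.tendsto _).mono_left nhdsWithin_le_nhds
      refine le_of_tendsto_of_tendsto htt hUt ?_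
      rw [hIoo]
      filter_upwards [self_mem_nhdsWithin] with s hs
      exact (hbefore_u s hs.1.le hs.2 x).le
    have hatv : ∀ x ∈ K, v x tstar ≤ V tstar := by
      intro x hxK
      have hcw : ContinuousWithinAt (fun s => v x s) (Set.Ico 0 T) tstar := by
        have h1' : ContinuousWithinAt (fun pr : EuclideanSpace ℝ (Fin N) × ℝ => v pr.1 pr.2)
            (K ×ˢ Set.Ico 0 T) (x, tstar) := hvc _ ⟨hxK, ⟨htstar0, htstarT⟩⟩
        exact h1'.comp ((continuous_const.prodMk continuous_id).continuousWithinAt)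
          (fun s hs => ⟨hxK, hs⟩)
      have htt : Tendsto (fun s => v x s) (𝓝[<] tstar) (𝓝 (v x tstar)) := by
        rw [hIoo]
        exact hcw.tendsto.mono_left (nhdsWithin_mono _ hIooSub)
      have hVt : Tendsto V (𝓝[<] tstar) (𝓝 (V tstar)) :=
        (hVc.tendsto _).mono_left nhdsWithin_le_nhds
      refine le_of_tendsto_of_tendsto htt hVt ?_
      rw [hIoo]
      filter_upwards [self_mem_nhdsWithin] with s hs
      exact (hbefore_v s hs.1.le hs.2 x hxK).le
    -- continuity of u in space at time tstar
    have hucont : Continuous (fun y => u y tstar) := by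
      rw [← continuousOn_univ]
      exact huc.comp ((continuous_id.prodMk continuous_const).continuousOn)
        (fun y _ => ⟨trivial, ⟨htstar0, htstarT⟩⟩)
    -- case analysis on which component makes contact
    rcases le_max_iff.mp hcontact with hcu | hcv
    -- CASE u
    · have hequ : u x₁ tstar = U tstar := le_antisymm (hatu x₁) (by linarith)
      have hx₁Ω : x₁ ∈ Ω := by
        by_contra hxo
        have h0 := huo x₁ hxo tstar ⟨htstar0, htstarT⟩
        have := hUA tstar htstar0
        rw [h0] at hequ
        have := hU0 tstar
        linarith [hequ ▸ this]
      have hder := hue x₁ hx₁Ω tstar ⟨htstar_pos, htstarT⟩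
      have hgd : HasDerivAt (fun s => u x₁ s - U s)
          ((convol J (fun y => u y tstar) x₁ - u x₁ tstar + u x₁ tstar ^ α * v x₁ tstar ^ p)
            - L * A * Real.exp (L * tstar)) tstar := hder.sub (hUd tstar)
      have hd0 : 0 ≤ (convol J (fun y => u y tstar) x₁ - u x₁ tstar
          + u x₁ tstar ^ α * v x₁ tstar ^ p) - L * A * Real.exp (L * tstar) := by
        apply aux_left_deriv_nonneg htstar_pos hgd
        intro s hs0 hst
        have h' := hbefore_u s hs0 hst x₁
        have : u x₁ tstar - U tstar = 0 := by rw [hequ]; ring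
        linarith
      have hconv : convol J (fun y => u y tstar) x₁ ≤ U tstar :=
        aux_convol_le hJc hJs hJnn hJ1 hucont hatu (fun y => hun y tstar) x₁
      have hpow : u x₁ tstar ^ α * v x₁ tstar ^ p ≤ U tstar ^ α * V tstar ^ p := by
        apply mul_le_mul
        · exact Real.rpow_le_rpow (hun _ _) (hatu x₁) hα
        · exact Real.rpow_le_rpow (hvn _ _) (hatv x₁ hx₁K) hp.le
        · exact Real.rpow_nonneg (hvn _ _) _
        · exact Real.rpow_nonneg (hU0 tstar).le _
      have hUVpow : U tstar ^ α * V tstar ^ p ≤ A ^ α * B ^ p * Real.exp (L * tstar) := by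
        have e1 : U tstar = A * Real.exp (L * tstar) := rfl
        have e2 : V tstar = B * Real.exp (Me * tstar) := rfl
        rw [e1, e2, Real.mul_rpow hA0.le (Real.exp_pos _).le,
          Real.mul_rpow hB0.le (Real.exp_pos _).le, ← Real.exp_mul, ← Real.exp_mul]
        have e3 : Real.exp (L * tstar * α) * Real.exp (Me * tstar * p)
            = Real.exp ((α * L + p * Me) * tstar) := by
          rw [← Real.exp_add]; congr 1; ring
        have hABnn : 0 ≤ A ^ α * B ^ p :=
          mul_nonneg (Real.rpow_nonneg hA0.le _) (Real.rpow_nonneg hB0.le _)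
        calc A ^ α * Real.exp (L * tstar * α) * (B ^ p * Real.exp (Me * tstar * p))
            = A ^ α * B ^ p * (Real.exp (L * tstar * α) * Real.exp (Me * tstar * p)) := by ring
        _ = A ^ α * B ^ p * Real.exp ((α * L + p * Me) * tstar) := by rw [e3]
        _ ≤ A ^ α * B ^ p * Real.exp (L * tstar) := by
            apply mul_le_mul_of_nonneg_left _ hABnn
            exact Real.exp_le_exp.mpr (mul_le_mul_of_nonneg_right hexp1 htstar0)
      have hfin : A ^ α * B ^ p * Real.exp (L * tstar) < L * A * Real.exp (L * tstar) :=
        mul_lt_mul_of_pos_right hsup1 (Real.exp_pos _)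
      rw [hequ] at hd0 hpow
      linarith
    -- CASE v
    · have heqv : v x₁ tstar = V tstar := le_antisymm (hatv x₁ hx₁K) (by linarith)
      have hvpos : 0 < v x₁ tstar := by rw [heqv]; exact hV0 _
      have hx₁Ω : x₁ ∈ Ω := by
        by_contra hxo
        have hfr : x₁ ∈ frontier Ω := by
          rw [← closure_diff_interior, hΩo.interior_eq]
          exact ⟨hx₁K, hxo⟩
        have h0 := hvbd x₁ hfr tstar ⟨htstar0, htstarT⟩
        rw [h0] at hvpos
        exact lt_irrefl _ hvpos
      have hder := hve x₁ hx₁Ω tstar ⟨htstar_pos, htstarT⟩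
      have hlap : lap (fun y => v y tstar) x₁ ≤ 0 := by
        apply aux_lap_nonpos hΩo (hvC2 tstar ⟨htstar_pos, htstarT⟩) hx₁Ω
        filter_upwards [hΩo.mem_nhds hx₁Ω] with y hy
        rw [heqv]
        exact hatv y (hΩK hy)
      have hgd : HasDerivAt (fun s => v x₁ s - V s)
          ((lap (fun y => v y tstar) x₁ + u x₁ tstar ^ q * v x₁ tstar ^ β)
            - Me * B * Real.exp (Me * tstar)) tstar := hder.sub (hVd tstar)
      have hd0 : 0 ≤ (lap (fun y => v y tstar) x₁ + u x₁ tstar ^ q * v x₁ tstar ^ β)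
          - Me * B * Real.exp (Me * tstar) := by
        apply aux_left_deriv_nonneg htstar_pos hgd
        intro s hs0 hst
        have h' := hbefore_v s hs0 hst x₁ hx₁K
        have : v x₁ tstar - V tstar = 0 := by rw [heqv]; ring
        linarith
      have hpow : u x₁ tstar ^ q * v x₁ tstar ^ β ≤ U tstar ^ q * V tstar ^ β := by
        apply mul_le_mul
        · exact Real.rpow_le_rpow (hun _ _) (hatu x₁) hq.le
        · exact Real.rpow_le_rpow (hvn _ _) (hatv x₁ hx₁K) hβ
        · exact Real.rpow_nonneg (hvn _ _) _
        · exact Real.rpow_nonneg (hU0 tstar).le _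
      have hUVpow : U tstar ^ q * V tstar ^ β ≤ A ^ q * B ^ β * Real.exp (Me * tstar) := by
        have e1 : U tstar = A * Real.exp (L * tstar) := rfl
        have e2 : V tstar = B * Real.exp (Me * tstar) := rfl
        rw [e1, e2, Real.mul_rpow hA0.le (Real.exp_pos _).le,
          Real.mul_rpow hB0.le (Real.exp_pos _).le, ← Real.exp_mul, ← Real.exp_mul]
        have e3 : Real.exp (L * tstar * q) * Real.exp (Me * tstar * β)
            = Real.exp ((q * L + β * Me) * tstar) := by
          rw [← Real.exp_add]; congr 1; ring
        have hABnn : 0 ≤ A ^ q * B ^ β :=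
          mul_nonneg (Real.rpow_nonneg hA0.le _) (Real.rpow_nonneg hB0.le _)
        calc A ^ q * Real.exp (L * tstar * q) * (B ^ β * Real.exp (Me * tstar * β))
            = A ^ q * B ^ β * (Real.exp (L * tstar * q) * Real.exp (Me * tstar * β)) := by ring
        _ = A ^ q * B ^ β * Real.exp ((q * L + β * Me) * tstar) := by rw [e3]
        _ ≤ A ^ q * B ^ β * Real.exp (Me * tstar) := by
            apply mul_le_mul_of_nonneg_left _ hABnn
            exact Real.exp_le_exp.mpr (mul_le_mul_of_nonneg_right hexp2 htstar0)
      have hfin : A ^ q * B ^ β * Real.exp (Me * tstar) < Me * B * Real.exp (Me * tstar) :=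
        mul_lt_mul_of_pos_right hsup2 (Real.exp_pos _)
      linarith
  -- conclusion
  intro T' hT'
  refine ⟨max (A * Real.exp (L * max T' 0)) (B * Real.exp (Me * max T' 0)), ?_⟩
  intro x hx t ht0 htT'
  have htT : t < T := lt_of_lt_of_le htT' hT'
  obtain ⟨hu', hv'⟩ := key t ht0 htT
  have htm : t ≤ max T' 0 := le_max_of_le_left htT'.le
  apply max_le
  · apply le_max_of_le_left
    calc u x t ≤ U t := (hu' x).le
    _ ≤ A * Real.exp (L * max T' 0) :=
        mul_le_mul_of_nonneg_left
          (Real.exp_le_exp.mpr (mul_le_mul_of_nonneg_left htm hL0.le)) hA0.le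
  · apply le_max_of_le_right
    calc v x t ≤ V t := (hv' x (hΩK hx)).le
    _ ≤ B * Real.exp (Me * max T' 0) :=
        mul_le_mul_of_nonneg_left
          (Real.exp_le_exp.mpr (mul_le_mul_of_nonneg_left htm hMe0.le)) hB0.le
end

section
/- Let α > 1, c > 0 and λ > 0. There is no differentiable function y : [0,∞) → ℝ with y(t) > 0 for all t ≥ 0 satisfying y'(t) ≥ c e^{−λ t} y(t)^α − y(t) for all t > 0 and y(0)^{1−α} < c(α−1)/(α−1+λ). (Equivalently, any positive solution of this differential inequality whose initial value satisfies y(0) > (c(α−1)/(α−1+λ))^{−1/(α−1)} blows up in finite time.) -/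
open Real

/-- ODE core of blow-up for `α > 1`: there is no positive differentiable solution on
`[0,∞)` of `y' ≥ c e^(-λ t) y^α - y` with `y(0)^(1-α) < c(α-1)/(α-1+λ)`. -/
theorem stmt5 (α c lam : ℝ) (hα : 1 < α) (hc : 0 < c) (hlam : 0 < lam) :
    ¬ ∃ y : ℝ → ℝ,
      (∀ t : ℝ, 0 ≤ t → 0 < y t) ∧
      (∀ t : ℝ, 0 ≤ t → DifferentiableAt ℝ y t) ∧
      (∀ t : ℝ, 0 < t → c * Real.exp (-lam * t) * y t ^ α - y t ≤ deriv y t) ∧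
      y 0 ^ (1 - α) < c * (α - 1) / (α - 1 + lam) := by
  rintro ⟨y, hpos, hdiff, hineq, hinit⟩
  have hα1 : (0:ℝ) < α - 1 := by linarith
  set K : ℝ := α - 1 + lam with hKdef
  have hK : 0 < K := by simp only [hKdef]; linarith
  set B : ℝ := c * (α - 1) / K with hBdef
  have hB : 0 < B := div_pos (mul_pos hc hα1) hK
  set w0 : ℝ := y 0 ^ (1 - α) with hw0def
  have hw0pos : 0 < w0 := Real.rpow_pos_of_pos (hpos 0 le_rfl) _
  have hw0B : w0 < B := hinit
  set h : ℝ → ℝ := fun t =>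
    (w0 - B * (1 - Real.exp (-K * t))) - Real.exp (-(α - 1) * t) * y t ^ (1 - α) with hhdef
  -- Derivative of h at each t ≥ 0
  have hderiv : ∀ t : ℝ, 0 ≤ t → HasDerivAt h
      ((B * (Real.exp (-K * t) * (-K)))
        - (Real.exp (-(α - 1) * t) * (-(α - 1)) * y t ^ (1 - α)
          + Real.exp (-(α - 1) * t) * (deriv y t * (1 - α) * y t ^ (-α)))) t := by
    intro t ht
    have hyt : 0 < y t := hpos t ht
    have hy : HasDerivAt y (deriv y t) t := (hdiff t ht).hasDerivAt
    have h1 : HasDerivAt (fun s => y s ^ (1 - α)) (deriv y t * (1 - α) * y t ^ (1 - α - 1)) t :=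
      hy.rpow_const (Or.inl (ne_of_gt hyt))
    have heq : (1:ℝ) - α - 1 = -α := by ring
    rw [heq] at h1
    have hlin1 : HasDerivAt (fun s : ℝ => -(α - 1) * s) (-(α - 1)) t := by
      simpa using (hasDerivAt_id t).const_mul (-(α - 1))
    have h2 : HasDerivAt (fun s : ℝ => Real.exp (-(α - 1) * s))
        (Real.exp (-(α - 1) * t) * (-(α - 1))) t := hlin1.exp
    have hlin2 : HasDerivAt (fun s : ℝ => -K * s) (-K) t := by
      simpa using (hasDerivAt_id t).const_mul (-K)
    have h3 : HasDerivAt (fun s : ℝ => Real.exp (-K * s)) (Real.exp (-K * t) * (-K)) t :=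
      hlin2.exp
    have hF : HasDerivAt (fun s : ℝ => w0 - B * (1 - Real.exp (-K * s)))
        ((B * (Real.exp (-K * t) * (-K)))) t := by
      have := ((h3.const_sub 1).const_mul B).const_sub w0
      exact this.congr_deriv (by ring)
    exact hF.sub (h2.mul h1)
  -- nonnegativity of the derivative for t > 0
  have hderiv_nonneg : ∀ t : ℝ, 0 < t → 0 ≤
      ((B * (Real.exp (-K * t) * (-K)))
        - (Real.exp (-(α - 1) * t) * (-(α - 1)) * y t ^ (1 - α)
          + Real.exp (-(α - 1) * t) * (deriv y t * (1 - α) * y t ^ (-α)))) := by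
    intro t ht
    have ht' : 0 ≤ t := ht.le
    have hyt : 0 < y t := hpos t ht'
    set P := y t with hPdef
    set L := Real.exp (-lam * t) with hLdef
    set E := Real.exp (-(α - 1) * t) with hEdef
    have hL : 0 < L := Real.exp_pos _
    have hE : 0 < E := Real.exp_pos _
    have hPa : 0 < P ^ (-α) := Real.rpow_pos_of_pos hyt _
    have e1 : P ^ (-α) * P ^ α = 1 := by
      rw [← Real.rpow_add hyt]; norm_num
    have e2 : P ^ (-α) * P = P ^ (1 - α) := by
      have h := Real.rpow_add hyt (-α) 1
      rw [Real.rpow_one] at h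
      rw [← h]
      congr 1
      ring
    have hmul := mul_le_mul_of_nonneg_left (hineq t ht) hPa.le
    rw [← hPdef, ← hLdef] at hmul
    have hQ : 0 ≤ P ^ (1 - α) + P ^ (-α) * deriv y t - c * L := by
      rw [show P ^ (-α) * (c * L * P ^ α - P)
          = c * L * (P ^ (-α) * P ^ α) - P ^ (-α) * P from by ring, e1, e2] at hmul
      linarith
    have hsplit : Real.exp (-K * t) = E * L := by
      rw [hEdef, hLdef, ← Real.exp_add]
      congr 1
      simp only [hKdef]
      ring
    have hBK : B * K = c * (α - 1) := by
      rw [hBdef]; field_simp [hK.ne']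
    have hrw : ((B * (Real.exp (-K * t) * (-K)))
        - (E * (-(α - 1)) * P ^ (1 - α) + E * (deriv y t * (1 - α) * P ^ (-α))))
        = (α - 1) * E * (P ^ (1 - α) + P ^ (-α) * deriv y t - c * L) := by
      rw [hsplit]
      linear_combination (-(E * L)) * hBK
    rw [hrw]
    exact mul_nonneg (mul_nonneg hα1.le hE.le) hQ
  -- h is monotone on [0,∞)
  have hmono : MonotoneOn h (Set.Ici (0:ℝ)) := by
    apply monotoneOn_of_deriv_nonneg (convex_Ici 0)
    · intro t ht
      exact ((hderiv t ht).differentiableAt).continuousAt.continuousWithinAt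
    · intro t ht
      rw [interior_Ici] at ht
      exact ((hderiv t (le_of_lt ht)).differentiableAt).differentiableWithinAt
    · intro t ht
      rw [interior_Ici] at ht
      rw [(hderiv t (le_of_lt ht)).deriv]
      exact hderiv_nonneg t ht
  have h0 : h 0 = 0 := by
    simp [hhdef, hw0def]
  -- choose a large time T
  set ε : ℝ := (B - w0) / B with hεdef
  have hε : 0 < ε := div_pos (by linarith) hB
  set T : ℝ := max 1 ((-Real.log ε) / K + 1) with hTdef
  have hT0 : (0:ℝ) < T := lt_of_lt_of_le one_pos (le_max_left _ _)
  have hTb : (-Real.log ε) / K < T :=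
    lt_of_lt_of_le (by linarith) (le_max_right _ _)
  have hexpT : Real.exp (-K * T) < ε := by
    have h1 : -Real.log ε < K * T := by
      rw [div_lt_iff₀ hK] at hTb
      linarith [hTb]
    have h2 : -K * T < Real.log ε := by linarith
    calc Real.exp (-K * T) < Real.exp (Real.log ε) := Real.exp_lt_exp.mpr h2
      _ = ε := Real.exp_log hε
  have hle : 0 ≤ h T := by
    rw [← h0]
    exact hmono (Set.self_mem_Ici) (Set.mem_Ici.mpr hT0.le) hT0.le
  have hwT : 0 < Real.exp (-(α - 1) * T) * y T ^ (1 - α) :=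
    mul_pos (Real.exp_pos _) (Real.rpow_pos_of_pos (hpos T hT0.le) _)
  have hBε : B * ε = B - w0 := by
    rw [hεdef]; field_simp [hB.ne']
  have hmul2 : B * Real.exp (-K * T) < B * ε := mul_lt_mul_of_pos_left hexpT hB
  have : h T = w0 - B * (1 - Real.exp (-K * T)) - Real.exp (-(α - 1) * T) * y T ^ (1 - α) := rfl
  nlinarith [hle, hmul2, hBε, hwT, this]
end

section
/- Let β > 1, μ > 0, λ > 0 and C > 0. If I : [0,T] → ℝ is differentiable with I(t) > 0 for all t ∈ [0,T] and satisfies I'(t) ≥ −μ I(t) + C e^{−λ t} I(t)^β for all t ∈ (0,T), then for all t ∈ [0,T]: I(t)^{1−β} ≤ e^{μ(β−1)t} ( I(0)^{1−β} − ((β−1)C/(λ + μ(β−1))) (1 − e^{−(λ+μ(β−1))t}) ). -/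
open Real Set

/-- Bernoulli-type integration of `I' ≥ -μ I + C e^(-λ t) I^β` on `[0,T]`. -/
theorem stmt6 (β μ lam C T : ℝ) (hβ : 1 < β) (hμ : 0 < μ) (hlam : 0 < lam)
    (hC : 0 < C) (hT : 0 < T) (I : ℝ → ℝ)
    (hpos : ∀ t ∈ Icc (0:ℝ) T, 0 < I t)
    (hdiff : ∀ t ∈ Icc (0:ℝ) T, DifferentiableAt ℝ I t)
    (hineq : ∀ t ∈ Ioo (0:ℝ) T, -μ * I t + C * Real.exp (-lam * t) * I t ^ β ≤ deriv I t) :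
    ∀ t ∈ Icc (0:ℝ) T,
      I t ^ (1 - β) ≤ Real.exp (μ * (β - 1) * t) *
        (I 0 ^ (1 - β) - ((β - 1) * C / (lam + μ * (β - 1))) *
          (1 - Real.exp (-(lam + μ * (β - 1)) * t))) := by
  have hb : (0:ℝ) < μ * (β - 1) := mul_pos hμ (by linarith)
  have ha : (0:ℝ) < lam + μ * (β - 1) := by linarith
  have hk : (0:ℝ) < (β - 1) * C := mul_pos (by linarith) hC
  set G : ℝ → ℝ := fun s => Real.exp (-(μ * (β - 1)) * s) * I s ^ (1 - β)
      - ((β - 1) * C / (lam + μ * (β - 1))) * Real.exp (-(lam + μ * (β - 1)) * s) with hG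
  -- continuity of G on [0,T]
  have hcont : ContinuousOn G (Icc 0 T) := by
    apply ContinuousOn.sub
    · exact (Continuous.continuousOn (by continuity)).mul
        (ContinuousOn.rpow_const
          (fun s hs => (hdiff s hs).continuousAt.continuousWithinAt)
          (fun s hs => Or.inl (hpos s hs).ne'))
    · exact Continuous.continuousOn (by continuity)
  -- derivative of G at interior points
  have hderivAt : ∀ s ∈ Ioo (0:ℝ) T, HasDerivAt G
      (Real.exp (-(μ * (β - 1)) * s) * (-(μ * (β - 1))) * I s ^ (1 - β)
        + Real.exp (-(μ * (β - 1)) * s) * (deriv I s * (1 - β) * I s ^ (1 - β - 1))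
        - ((β - 1) * C / (lam + μ * (β - 1))) *
            (Real.exp (-(lam + μ * (β - 1)) * s) * (-(lam + μ * (β - 1))))) s := by
    intro s hs
    have hsI : s ∈ Icc (0:ℝ) T := ⟨hs.1.le, hs.2.le⟩
    have h1 : HasDerivAt (fun x : ℝ => Real.exp (-(μ * (β - 1)) * x))
        (Real.exp (-(μ * (β - 1)) * s) * (-(μ * (β - 1)))) s := by
      have := ((hasDerivAt_id s).const_mul (-(μ * (β - 1)))).exp
      simpa [mul_comm] using this
    have h2 : HasDerivAt (fun x : ℝ => I x ^ (1 - β))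
        (deriv I s * (1 - β) * I s ^ (1 - β - 1)) s :=
      ((hdiff s hsI).hasDerivAt).rpow_const (Or.inl (hpos s hsI).ne')
    have h3 : HasDerivAt (fun x : ℝ => Real.exp (-(lam + μ * (β - 1)) * x))
        (Real.exp (-(lam + μ * (β - 1)) * s) * (-(lam + μ * (β - 1)))) s := by
      have := ((hasDerivAt_id s).const_mul (-(lam + μ * (β - 1)))).exp
      simpa [mul_comm] using this
    exact (h1.mul h2).sub (h3.const_mul _) |>.congr_deriv (by ring)
  -- the derivative is nonpositive
  have hnonpos : ∀ s ∈ Ioo (0:ℝ) T,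
      Real.exp (-(μ * (β - 1)) * s) * (-(μ * (β - 1))) * I s ^ (1 - β)
        + Real.exp (-(μ * (β - 1)) * s) * (deriv I s * (1 - β) * I s ^ (1 - β - 1))
        - ((β - 1) * C / (lam + μ * (β - 1))) *
            (Real.exp (-(lam + μ * (β - 1)) * s) * (-(lam + μ * (β - 1)))) ≤ 0 := by
    intro s hs
    have hsI : s ∈ Icc (0:ℝ) T := ⟨hs.1.le, hs.2.le⟩
    have hw : 0 < I s := hpos s hsI
    have hQ : 0 < I s ^ (1 - β - 1) := Real.rpow_pos_of_pos hw _
    have hI' := hineq s hs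
    have h1 : I s ^ (1 - β - 1) * I s = I s ^ (1 - β) := by
      have h := (Real.rpow_add hw (1 - β - 1) 1).symm
      rw [Real.rpow_one] at h
      rw [h, show (1 - β - 1 + 1 : ℝ) = 1 - β by ring]
    have h2 : I s ^ (1 - β - 1) * I s ^ β = 1 := by
      rw [← Real.rpow_add hw]
      norm_num
    have h3 : Real.exp (-(μ * (β - 1)) * s) * Real.exp (-lam * s)
        = Real.exp (-(lam + μ * (β - 1)) * s) := by
      rw [← Real.exp_add]; congr 1; ring
    have key : Real.exp (-(μ * (β - 1)) * s) * (deriv I s * (1 - β) * I s ^ (1 - β - 1))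
        ≤ Real.exp (-(μ * (β - 1)) * s) *
          ((-μ * I s + C * Real.exp (-lam * s) * I s ^ β) * (1 - β) * I s ^ (1 - β - 1)) := by
      apply mul_le_mul_of_nonneg_left _ (Real.exp_pos _).le
      have hc : (1 - β) * I s ^ (1 - β - 1) ≤ 0 :=
        mul_nonpos_of_nonpos_of_nonneg (by linarith) hQ.le
      calc deriv I s * (1 - β) * I s ^ (1 - β - 1)
          = ((1 - β) * I s ^ (1 - β - 1)) * deriv I s := by ring
        _ ≤ ((1 - β) * I s ^ (1 - β - 1)) *
            (-μ * I s + C * Real.exp (-lam * s) * I s ^ β) :=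
            mul_le_mul_of_nonpos_left hI' hc
        _ = (-μ * I s + C * Real.exp (-lam * s) * I s ^ β) * (1 - β) * I s ^ (1 - β - 1) := by
            ring
    have expand : Real.exp (-(μ * (β - 1)) * s) *
        ((-μ * I s + C * Real.exp (-lam * s) * I s ^ β) * (1 - β) * I s ^ (1 - β - 1))
        = μ * (β - 1) * (Real.exp (-(μ * (β - 1)) * s) * I s ^ (1 - β))
          - (β - 1) * C * Real.exp (-(lam + μ * (β - 1)) * s) := by
      rw [← h3]
      linear_combination (μ * (β - 1) * Real.exp (-(μ * (β - 1)) * s)) * h1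
        + ((1 - β) * C * Real.exp (-(μ * (β - 1)) * s) * Real.exp (-lam * s)) * h2
    have hdivcancel : ((β - 1) * C / (lam + μ * (β - 1))) *
        (Real.exp (-(lam + μ * (β - 1)) * s) * (-(lam + μ * (β - 1))))
        = -((β - 1) * C * Real.exp (-(lam + μ * (β - 1)) * s)) := by
      rw [div_mul_eq_mul_div, div_eq_iff ha.ne']
      ring
    rw [hdivcancel]
    nlinarith [key, expand]
  -- G is antitone
  have hanti : AntitoneOn G (Icc 0 T) := by
    apply antitoneOn_of_deriv_nonpos (convex_Icc 0 T) hcont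
    · intro s hs
      rw [interior_Icc] at hs
      exact (hderivAt s hs).differentiableAt.differentiableWithinAt
    · intro s hs
      rw [interior_Icc] at hs
      rw [(hderivAt s hs).deriv]
      exact hnonpos s hs
  intro t ht
  have hGle : G t ≤ G 0 := hanti (left_mem_Icc.mpr hT.le) ht ht.1
  have hG0 : G 0 = I 0 ^ (1 - β) - (β - 1) * C / (lam + μ * (β - 1)) := by
    simp [hG]
  have hS : Real.exp (-(μ * (β - 1)) * t) * I t ^ (1 - β)
      ≤ I 0 ^ (1 - β) - ((β - 1) * C / (lam + μ * (β - 1))) *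
          (1 - Real.exp (-(lam + μ * (β - 1)) * t)) := by
    have : G t = Real.exp (-(μ * (β - 1)) * t) * I t ^ (1 - β)
        - ((β - 1) * C / (lam + μ * (β - 1))) * Real.exp (-(lam + μ * (β - 1)) * t) := rfl
    rw [this, hG0] at hGle
    linarith [hGle]
  have h4 : Real.exp (μ * (β - 1) * t) * Real.exp (-(μ * (β - 1)) * t) = 1 := by
    rw [← Real.exp_add, show μ * (β - 1) * t + -(μ * (β - 1)) * t = 0 by ring, Real.exp_zero]
  calc I t ^ (1 - β)
      = Real.exp (μ * (β - 1) * t) * (Real.exp (-(μ * (β - 1)) * t) * I t ^ (1 - β)) := by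
        rw [← mul_assoc, h4, one_mul]
    _ ≤ Real.exp (μ * (β - 1) * t) *
        (I 0 ^ (1 - β) - ((β - 1) * C / (lam + μ * (β - 1))) *
          (1 - Real.exp (-(lam + μ * (β - 1)) * t))) :=
        mul_le_mul_of_nonneg_left hS (Real.exp_pos _).le
end

section
/- Let β > 1, μ > 0, λ > 0 and C > 0. There is no differentiable function I : [0,∞) → ℝ with I(t) > 0 for all t ≥ 0 satisfying both I'(t) ≥ −μ I(t) + C e^{−λ t} I(t)^β for all t > 0 and I(0)^{1−β} < (β−1)C/(λ + μ(β−1)). (Equivalently, any positive solution of this differential inequality with I(0) large enough blows up in finite time.) -/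
open Real

/-- ODE core of blow-up via Kaplan's method for `β > 1`: there is no positive
differentiable solution on `[0,∞)` of `I' ≥ -μ I + C e^(-λ t) I^β` with
`I(0)^(1-β) < (β-1)C/(λ + μ(β-1))`. -/
theorem stmt7 (β μ lam C : ℝ) (hβ : 1 < β) (hμ : 0 < μ) (hlam : 0 < lam) (hC : 0 < C) :
    ¬ ∃ I : ℝ → ℝ,
      (∀ t : ℝ, 0 ≤ t → 0 < I t) ∧
      (∀ t : ℝ, 0 ≤ t → DifferentiableAt ℝ I t) ∧
      (∀ t : ℝ, 0 < t → -μ * I t + C * Real.exp (-lam * t) * I t ^ β ≤ deriv I t) ∧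
      I 0 ^ (1 - β) < (β - 1) * C / (lam + μ * (β - 1)) := by
  rintro ⟨I, hpos, hdiff, hineq, h0⟩
  set a : ℝ := μ * (β - 1) with ha
  set b : ℝ := (β - 1) * C with hb
  set s : ℝ := lam + a with hs
  have hβ' : 0 < β - 1 := by linarith
  have ha0 : 0 < a := mul_pos hμ hβ'
  have hb0 : 0 < b := mul_pos hβ' hC
  have hs0 : 0 < s := by positivity
  have h0' : I 0 ^ (1 - β) < b / s := by
    have : lam + μ * (β - 1) = s := by rw [hs, ha]
    rw [← this]; exact h0
  set K : ℝ → ℝ := fun t => Real.exp (-a * t) * I t ^ (1 - β)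
      - (b / s) * Real.exp (-s * t) with hK
  -- derivative of K at points t ≥ 0
  have hKderiv : ∀ t : ℝ, 0 ≤ t →
      HasDerivAt K (Real.exp (-a * t) * (-a) * I t ^ (1 - β)
        + Real.exp (-a * t) * (deriv I t * (1 - β) * I t ^ (1 - β - 1))
        - (b / s) * (Real.exp (-s * t) * (-s))) t := by
    intro t ht
    have hI : HasDerivAt I (deriv I t) t := (hdiff t ht).hasDerivAt
    have h1 : HasDerivAt (fun u : ℝ => Real.exp (-a * u)) (Real.exp (-a * t) * (-a)) t := by
      have := (((hasDerivAt_id t).const_mul (-a)).exp)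
      simpa using this
    have h2 : HasDerivAt (fun u : ℝ => I u ^ (1 - β))
        (deriv I t * (1 - β) * I t ^ (1 - β - 1)) t :=
      hI.rpow_const (Or.inl (hpos t ht).ne')
    have h3 := h1.mul h2
    have h4 : HasDerivAt (fun u : ℝ => (b / s) * Real.exp (-s * u))
        ((b / s) * (Real.exp (-s * t) * (-s))) t := by
      have := (((hasDerivAt_id t).const_mul (-s)).exp).const_mul (b / s)
      simpa using this
    exact h3.sub h4
  have hKdiff : ∀ t : ℝ, 0 ≤ t → DifferentiableAt ℝ K t :=
    fun t ht => (hKderiv t ht).differentiableAt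
  -- deriv K ≤ 0 on (0, ∞)
  have hderiv_le : ∀ t : ℝ, 0 < t → deriv K t ≤ 0 := by
    intro t ht
    have ht' : 0 ≤ t := ht.le
    have hIt : 0 < I t := hpos t ht'
    rw [(hKderiv t ht').deriv]
    set P : ℝ := I t ^ (1 - β) with hP
    have hQ : I t ^ (1 - β - 1) = I t ^ (-β) := by norm_num
    set Q : ℝ := I t ^ (-β) with hQ'
    rw [hQ]
    have hQ0 : 0 < Q := Real.rpow_pos_of_pos hIt _
    have hIQ : I t * Q = P := by
      rw [hQ', hP, show (1 : ℝ) - β = 1 + -β by ring, Real.rpow_add hIt, Real.rpow_one]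
    have hIbQ : I t ^ β * Q = 1 := by
      rw [hQ', ← Real.rpow_add hIt]
      simp
    -- key pointwise bound
    have key : deriv I t * (1 - β) * Q ≤ a * P - b * Real.exp (-lam * t) := by
      have h := hineq t ht
      have h' : (1 - β) * deriv I t ≤ (1 - β) * (-μ * I t + C * Real.exp (-lam * t) * I t ^ β) := by
        apply mul_le_mul_of_nonpos_left h (by linarith)
      have h'' : (1 - β) * deriv I t * Q ≤
          (1 - β) * (-μ * I t + C * Real.exp (-lam * t) * I t ^ β) * Q :=
        mul_le_mul_of_nonneg_right h' hQ0.le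
      have hrhs : (1 - β) * (-μ * I t + C * Real.exp (-lam * t) * I t ^ β) * Q
          = a * P - b * Real.exp (-lam * t) := by
        have : (1 - β) * (-μ * I t + C * Real.exp (-lam * t) * I t ^ β) * Q
            = (β - 1) * μ * (I t * Q) - (β - 1) * C * Real.exp (-lam * t) * (I t ^ β * Q) := by
          ring
        rw [this, hIQ, hIbQ, ha, hb]; ring
      calc deriv I t * (1 - β) * Q = (1 - β) * deriv I t * Q := by ring
        _ ≤ _ := h''.trans_eq hrhs
    have hexp : Real.exp (-lam * t) * Real.exp (-a * t) = Real.exp (-s * t) := by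
      rw [← Real.exp_add, hs]; ring_nf
    have hea : 0 < Real.exp (-a * t) := Real.exp_pos _
    have key2 : Real.exp (-a * t) * (deriv I t * (1 - β) * Q)
        ≤ a * (Real.exp (-a * t) * P) - b * Real.exp (-s * t) := by
      have h5 := mul_le_mul_of_nonneg_left key hea.le
      have h6 : Real.exp (-a * t) * (a * P - b * Real.exp (-lam * t))
          = a * (Real.exp (-a * t) * P) - b * Real.exp (-s * t) := by
        rw [← hexp]; ring
      rw [h6] at h5
      exact h5
    have geq : Real.exp (-a * t) * -a * P + Real.exp (-a * t) * (deriv I t * (1 - β) * Q)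
          - b / s * (Real.exp (-s * t) * -s)
        = Real.exp (-a * t) * (deriv I t * (1 - β) * Q)
          - (a * (Real.exp (-a * t) * P) - b * Real.exp (-s * t)) := by
      field_simp
      ring
    rw [geq]
    linarith [key2]
  -- K is antitone on [0, ∞)
  have hanti : AntitoneOn K (Set.Ici (0 : ℝ)) := by
    apply antitoneOn_of_deriv_nonpos (convex_Ici 0)
    · exact fun t ht => (hKdiff t ht).continuousAt.continuousWithinAt
    · intro t ht
      rw [interior_Ici] at ht
      exact (hKdiff t (le_of_lt ht)).differentiableWithinAt
    · intro t ht
      rw [interior_Ici] at ht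
      exact hderiv_le t ht
  -- choose a large time T
  set ε : ℝ := b / s - I 0 ^ (1 - β) with hε
  have hε0 : 0 < ε := by rw [hε]; linarith
  set T : ℝ := max 0 ((Real.log (b / (s * ε)) + 1) / s) with hT
  have hT0 : (0 : ℝ) ≤ T := le_max_left _ _
  have hexpT : Real.exp (-s * T) < s * ε / b := by
    have h1 : (Real.log (b / (s * ε)) + 1) / s ≤ T := le_max_right _ _
    have h2 : -s * T ≤ -(Real.log (b / (s * ε)) + 1) := by
      have := mul_le_mul_of_nonneg_left h1 hs0.le
      rw [mul_div_cancel₀ _ hs0.ne'] at this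
      nlinarith
    calc Real.exp (-s * T) ≤ Real.exp (-(Real.log (b / (s * ε)) + 1)) := Real.exp_le_exp.2 h2
      _ = Real.exp (-Real.log (b / (s * ε))) * Real.exp (-1) := by
          rw [← Real.exp_add]; ring_nf
      _ = (s * ε / b) * Real.exp (-1) := by
          rw [Real.exp_neg, Real.exp_log (by positivity), inv_div]
      _ < s * ε / b := by
          have h3 : Real.exp (-1 : ℝ) < 1 := Real.exp_lt_one_iff.2 (by norm_num)
          nlinarith [show (0:ℝ) < s * ε / b by positivity]
  have hKT : K T ≤ K 0 := hanti (Set.self_mem_Ici) (Set.mem_Ici.2 hT0) hT0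
  have hK0 : K 0 = I 0 ^ (1 - β) - b / s := by simp [hK]
  have hKTpos : -(b / s) * Real.exp (-s * T) < K T := by
    have : 0 < Real.exp (-a * T) * I T ^ (1 - β) :=
      mul_pos (Real.exp_pos _) (Real.rpow_pos_of_pos (hpos T hT0) _)
    rw [hK]; dsimp only; nlinarith
  have hfinal : -(ε) < -(b / s) * Real.exp (-s * T) := by
    have := (mul_lt_mul_of_pos_left hexpT (show (0:ℝ) < b / s by positivity))
    rw [show b / s * (s * ε / b) = ε by field_simp] at this
    nlinarith
  have hlast : K T ≤ -(ε) := by rw [hK0] at hKT; rw [hε]; linarith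
  exact absurd hlast (not_le.2 (hfinal.trans hKTpos))
end

section
/- Let Ω be a bounded smooth domain in ℝ^N and let (u,v) be a classical solution on [0,T), T < ∞, of the system u_t = J*u − u + u^α v^p, v_t = Δv + u^q v^β in Ω×(0,T) with u = 0 on (ℝ^N∖Ω)×(0,T), v = 0 on ∂Ω×(0,T). If α ≤ 1 and there exists K such that v(x,t) ≤ K for all (x,t) ∈ Ω×(0,T), then u is also bounded on Ω×(0,T); in particular, when α ≤ 1 the component u cannot blow up in finite time while v remains bounded. -/
open MeasureTheory Real Set Filter Topology

private lemma deriv_nonneg_of_neg_left {f : ℝ → ℝ} {f' a : ℝ} (h : HasDerivAt f f' a)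
    (h0 : 0 < a) (hlt : ∀ s ∈ Set.Ioo (0:ℝ) a, f s < 0) (hge : 0 ≤ f a) : 0 ≤ f' := by
  have hs := hasDerivAt_iff_tendsto_slope.mp h
  have hs' : Tendsto (slope f a) (𝓝[<] a) (𝓝 f') :=
    hs.mono_left (nhdsWithin_mono a (fun x hx => ne_of_lt hx))
  refine ge_of_tendsto hs' ?_
  filter_upwards [self_mem_nhdsWithin,
    nhdsWithin_le_nhds (Ioi_mem_nhds h0)] with s hs1 hs2
  have hsa : s < a := hs1
  have h1 : f s - f a ≤ 0 := by
    have := hlt s ⟨hs2, hsa⟩; linarith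
  have h2 : s - a ≤ 0 := by linarith
  rw [slope_def_field]
  exact div_nonneg_iff.mpr (Or.inr ⟨h1, h2⟩)

/-- If `α ≤ 1` and `v` is bounded on `Ω × (0,T)`, then `u` is bounded as well;
hence for `α ≤ 1` the component `u` cannot blow up while `v` stays bounded. -/
theorem stmt9
    {N : ℕ} (Ω : Set (EuclideanSpace ℝ (Fin N)))
    (hΩo : IsOpen Ω) (hΩb : Bornology.IsBounded Ω) (hΩne : Ω.Nonempty)
    (J : EuclideanSpace ℝ (Fin N) → ℝ) (hJc : Continuous J) (hJs : HasCompactSupport J)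
    (hJnn : ∀ x, 0 ≤ J x) (hJ0 : 0 < J 0) (hJ1 : ∫ x, J x = 1)
    (α β p q : ℝ) (hp : 0 < p) (hq : 0 < q) (hα : 0 ≤ α) (hβ : 0 ≤ β)
    (u v : EuclideanSpace ℝ (Fin N) → ℝ → ℝ) (u₀ v₀ : EuclideanSpace ℝ (Fin N) → ℝ)
    (hu₀c : Continuous u₀) (hv₀c : Continuous v₀)
    (hu₀ : ∀ x, 0 ≤ u₀ x) (hv₀ : ∀ x, 0 ≤ v₀ x)
    (T : ℝ) (hT : 0 < T) (hsol : IsSol Ω J α β p q u v u₀ v₀ T)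
    (hα1 : α ≤ 1) (K : ℝ) (hvK : ∀ x ∈ Ω, ∀ t ∈ Set.Ioo (0:ℝ) T, v x t ≤ K) :
    ∃ M : ℝ, ∀ x ∈ Ω, ∀ t ∈ Set.Ioo (0:ℝ) T, u x t ≤ M := by
  obtain ⟨hunn, hvnn, huc, hvc, hv2, hude, hvde, huout, hvbd, hu0, hv0⟩ := hsol
  set K' := max K 0 with hK'def
  have hK'0 : (0:ℝ) ≤ K' := le_max_right _ _
  set C : ℝ := K' ^ p + 1 with hCdef
  have hKp0 : (0:ℝ) ≤ K' ^ p := Real.rpow_nonneg hK'0 p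
  have hC1 : (1:ℝ) ≤ C := by simp only [hCdef]; linarith
  have hC0 : (0:ℝ) ≤ C := by linarith
  have hΩc : IsCompact (closure Ω) :=
    Metric.isCompact_of_isClosed_isBounded isClosed_closure hΩb.closure
  set A : ℝ := max (sSup (u₀ '' closure Ω)) 0 with hAdef
  have hA0 : (0:ℝ) ≤ A := le_max_right _ _
  have hAb : ∀ x ∈ closure Ω, u₀ x ≤ A := fun x hx =>
    le_trans (le_csSup (hΩc.image hu₀c).bddAbove ⟨x, hx, rfl⟩) (le_max_left _ _)
  -- the comparison function
  set w : ℝ → ℝ := fun s => (A + 1) * Real.exp (C * s) with hwdef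
  have hw1 : ∀ s : ℝ, 0 ≤ s → 1 ≤ w s := by
    intro s hs
    have h1 : (1:ℝ) ≤ Real.exp (C * s) := Real.one_le_exp (by positivity)
    have : (1:ℝ) * 1 ≤ (A + 1) * Real.exp (C * s) :=
      mul_le_mul (by linarith) h1 zero_le_one (by linarith)
    simpa [hwdef] using this
  have hwcont : Continuous w := by
    exact continuous_const.mul (Real.continuous_exp.comp (continuous_const.mul continuous_id))
  -- main comparison estimate up to any T' < T
  have key : ∀ T' : ℝ, 0 < T' → T' < T → ∀ x ∈ closure Ω, ∀ t ∈ Set.Icc (0:ℝ) T',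
      u x t ≤ w t := by
    intro T' hT'0 hT'T
    by_contra hcon
    push_neg at hcon
    obtain ⟨x₀, hx₀, t₀, ht₀, hbad⟩ := hcon
    set D : Set (EuclideanSpace ℝ (Fin N) × ℝ) := closure Ω ×ˢ Set.Icc 0 T' with hDdef
    have hDc : IsCompact D := hΩc.prod isCompact_Icc
    have hDsub : D ⊆ Set.univ ×ˢ Set.Ico 0 T := by
      rintro ⟨y, s⟩ ⟨hy, hs⟩
      exact ⟨trivial, hs.1, lt_of_le_of_lt hs.2 hT'T⟩
    have hfc : ContinuousOn (fun pr : EuclideanSpace ℝ (Fin N) × ℝ =>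
        u pr.1 pr.2 - w pr.2) D :=
      (huc.mono hDsub).sub (hwcont.comp continuous_snd).continuousOn
    set E : Set (EuclideanSpace ℝ (Fin N) × ℝ) :=
      D ∩ (fun pr : EuclideanSpace ℝ (Fin N) × ℝ => u pr.1 pr.2 - w pr.2) ⁻¹' Set.Ici 0
      with hEdef
    have hEne : E.Nonempty := ⟨(x₀, t₀), ⟨hx₀, ht₀⟩, by
      simp only [Set.mem_preimage, Set.mem_Ici]; linarith⟩
    have hEclosed : IsClosed E :=
      hfc.preimage_isClosed_of_isClosed hDc.isClosed isClosed_Ici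
    have hEc : IsCompact E := hDc.of_isClosed_subset hEclosed Set.inter_subset_left
    have hts_mem : sInf (Prod.snd '' E) ∈ Prod.snd '' E :=
      (hEc.image continuous_snd).sInf_mem (hEne.image _)
    obtain ⟨⟨xs, ts⟩, hxsE, htseq⟩ := hts_mem
    obtain ⟨⟨hxscl, hts0x, htsT'x⟩, hxsge0⟩ := hxsE
    have hts0 : (0:ℝ) ≤ ts := hts0x
    have htsT' : ts ≤ T' := htsT'x
    have htseq' : ts = sInf (Prod.snd '' E) := htseq
    have hxsge : w ts ≤ u xs ts := by
      have := hxsge0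
      simp only [Set.mem_preimage, Set.mem_Ici] at this
      linarith
    have hmin : ∀ y s, ((y, s) ∈ E) → ts ≤ s := by
      intro y s hys
      calc ts = sInf (Prod.snd '' E) := htseq'
        _ ≤ s := csInf_le (hEc.image continuous_snd).bddBelow ⟨(y, s), hys, rfl⟩
    have hts_pos : 0 < ts := by
      rcases lt_or_eq_of_le hts0 with h | h
      · exact h
      · exfalso
        have h0 : u xs 0 = u₀ xs := hu0 xs
        have hu_le : u xs ts ≤ A := by rw [show ts = 0 from h.symm, h0]; exact hAb xs hxscl
        have hw0 : w ts = A + 1 := by rw [show ts = 0 from h.symm]; simp [hwdef]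
        rw [hw0] at hxsge; linarith
    have htsT : ts < T := lt_of_le_of_lt htsT' hT'T
    -- everything strictly below w before time ts
    have hlt : ∀ y ∈ closure Ω, ∀ s ∈ Set.Ico (0:ℝ) ts, u y s < w s := by
      intro y hy s hs
      by_contra hge
      push_neg at hge
      have hmem : (y, s) ∈ E := ⟨⟨hy, hs.1, le_trans hs.2.le htsT'⟩, by
        simp only [Set.mem_preimage, Set.mem_Ici]; linarith⟩
      exact absurd (hmin y s hmem) (not_le.mpr hs.2)
    have hne : (𝓝[Set.Ioo (0:ℝ) ts] ts).NeBot := by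
      rw [← mem_closure_iff_nhdsWithin_neBot, closure_Ioo hts_pos.ne]
      exact ⟨hts_pos.le, le_refl ts⟩
    -- everything ≤ w at time ts
    have halle : ∀ y, u y ts ≤ w ts := by
      intro y
      by_cases hy : y ∈ Ω
      · have hycl : y ∈ closure Ω := subset_closure hy
        have hcy : ContinuousOn (fun s => u y s) (Set.Ico 0 T) := by
          have hmap : Set.MapsTo (fun s : ℝ => ((y, s) : EuclideanSpace ℝ (Fin N) × ℝ))
              (Set.Ico 0 T) (Set.univ ×ˢ Set.Ico 0 T) := fun s hs => ⟨trivial, hs⟩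
          exact huc.comp (Continuous.continuousOn
            (continuous_const.prodMk continuous_id)) hmap
        have hcw : ContinuousWithinAt (fun s => u y s) (Set.Ioo 0 ts) ts := by
          refine (hcy ts ⟨hts_pos.le, htsT⟩).mono ?_
          intro s hs; exact ⟨hs.1.le, lt_trans hs.2 htsT⟩
        have hwc : ContinuousWithinAt w (Set.Ioo 0 ts) ts :=
          hwcont.continuousWithinAt
        refine le_of_tendsto_of_tendsto hcw hwc ?_
        filter_upwards [self_mem_nhdsWithin] with s hs
        exact (hlt y hycl s ⟨hs.1.le, hs.2⟩).le
      · have hz : u y ts = 0 := huout y hy ts ⟨hts_pos.le, htsT⟩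
        rw [hz]; linarith [hw1 ts hts_pos.le]
    -- xs ∈ Ω
    have hxsΩ : xs ∈ Ω := by
      by_contra hxs
      have hz : u xs ts = 0 := huout xs hxs ts ⟨hts_pos.le, htsT⟩
      rw [hz] at hxsge; linarith [hw1 ts hts_pos.le]
    have hueq : u xs ts = w ts := le_antisymm (halle xs) hxsge
    -- the convolution bound
    have hcont_u : Continuous fun y => u y ts := by
      have hmap : Set.MapsTo (fun y : EuclideanSpace ℝ (Fin N) =>
          ((y, ts) : EuclideanSpace ℝ (Fin N) × ℝ))
          Set.univ (Set.univ ×ˢ Set.Ico 0 T) := fun y _ => ⟨trivial, hts_pos.le, htsT⟩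
      rw [← continuousOn_univ]
      exact huc.comp (Continuous.continuousOn
        (continuous_id.prodMk continuous_const)) hmap
    have hsupp : HasCompactSupport fun y => u y ts :=
      HasCompactSupport.intro hΩc (fun y hy =>
        huout y (fun h => hy (subset_closure h)) ts ⟨hts_pos.le, htsT⟩)
    have hJxc : Continuous fun y => J (xs - y) :=
      hJc.comp (continuous_const.sub continuous_id)
    have hJxs : HasCompactSupport fun y => J (xs - y) :=
      hJs.comp_homeomorph (Homeomorph.subLeft xs)
    have hint1 : Integrable (fun y => J (xs - y) * u y ts) :=
      (hJxc.mul hcont_u).integrable_of_hasCompactSupport hsupp.mul_left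
    have hintJ : Integrable (fun y => J (xs - y)) :=
      hJxc.integrable_of_hasCompactSupport hJxs
    have hint2 : Integrable (fun y => J (xs - y) * w ts) := hintJ.mul_const _
    have hconv : convol J (fun y => u y ts) xs ≤ w ts := by
      have hm : (∫ y, J (xs - y) * u y ts) ≤ ∫ y, J (xs - y) * w ts :=
        integral_mono hint1 hint2 (fun y =>
          mul_le_mul_of_nonneg_left (halle y) (hJnn _))
      have he : (∫ y, J (xs - y) * w ts) = w ts := by
        rw [MeasureTheory.integral_mul_const, integral_sub_left_eq_self J volume xs, hJ1,
          one_mul]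
      calc convol J (fun y => u y ts) xs = ∫ y, J (xs - y) * u y ts := rfl
        _ ≤ ∫ y, J (xs - y) * w ts := hm
        _ = w ts := he
    -- the ODE at the touching point
    have hd := hude xs hxsΩ ts ⟨hts_pos, htsT⟩
    have hlin : HasDerivAt (fun s : ℝ => C * s) C ts := by
      simpa using (hasDerivAt_id ts).const_mul C
    have hw' : HasDerivAt w ((A + 1) * (Real.exp (C * ts) * C)) ts :=
      (hlin.exp).const_mul (A + 1)
    have hg : HasDerivAt (fun s => u xs s - w s)
        ((convol J (fun y => u y ts) xs - u xs ts + u xs ts ^ α * v xs ts ^ p)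
          - (A + 1) * (Real.exp (C * ts) * C)) ts := hd.sub hw'
    have hgnn : 0 ≤ (convol J (fun y => u y ts) xs - u xs ts + u xs ts ^ α * v xs ts ^ p)
        - (A + 1) * (Real.exp (C * ts) * C) := by
      refine deriv_nonneg_of_neg_left hg hts_pos ?_ (by linarith)
      intro s hs
      have := hlt xs hxscl s ⟨hs.1.le, hs.2⟩
      linarith
    -- contradiction via the differential inequality
    have hw'eq : (A + 1) * (Real.exp (C * ts) * C) = C * w ts := by
      simp only [hwdef]; ring
    have hwts1 : (1:ℝ) ≤ w ts := hw1 ts hts_pos.le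
    have hrp : u xs ts ^ α * v xs ts ^ p ≤ w ts * K' ^ p := by
      have h1 : u xs ts ^ α ≤ u xs ts ^ (1:ℝ) := by
        refine Real.rpow_le_rpow_of_exponent_le ?_ hα1
        rw [hueq]; exact hwts1
      rw [Real.rpow_one] at h1
      have h2 : v xs ts ^ p ≤ K' ^ p := by
        refine Real.rpow_le_rpow (hvnn xs ts) ?_ hp.le
        exact le_trans (hvK xs hxsΩ ts ⟨hts_pos, htsT⟩) (le_max_left _ _)
      have h3 : (0:ℝ) ≤ v xs ts ^ p := Real.rpow_nonneg (hvnn xs ts) p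
      have h4 : (0:ℝ) ≤ u xs ts ^ α := Real.rpow_nonneg (hunn xs ts) α
      calc u xs ts ^ α * v xs ts ^ p ≤ u xs ts * (K' ^ p) :=
            mul_le_mul h1 h2 h3 (by rw [hueq]; linarith)
        _ = w ts * K' ^ p := by rw [hueq]
    rw [hw'eq] at hgnn
    have hCw : C * w ts = w ts * K' ^ p + w ts := by
      simp only [hCdef]; ring
    linarith [hconv, hrp, hwts1, hueq, hCw]
  -- conclude
  refine ⟨(A + 1) * Real.exp (C * T), ?_⟩
  intro x hx t ht
  have hT' : 0 < (t + T) / 2 := by linarith [ht.1]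
  have hT'T : (t + T) / 2 < T := by linarith [ht.2]
  have htmem : t ∈ Set.Icc (0:ℝ) ((t + T) / 2) := ⟨ht.1.le, by linarith [ht.2]⟩
  have h1 := key ((t + T) / 2) hT' hT'T x (subset_closure hx) t htmem
  have h2 : w t ≤ (A + 1) * Real.exp (C * T) := by
    have : Real.exp (C * t) ≤ Real.exp (C * T) :=
      Real.exp_le_exp.mpr (mul_le_mul_of_nonneg_left (by linarith [ht.2]) hC0)
    simp only [hwdef]
    nlinarith
  linarith
end

section
/- Let α > 1 + q with q > 0, let C > 0, T > 0 and β > 0, and let z : [0,T) → ℝ be differentiable with z(t) > 0 and z'(t) ≤ C (T−t)^{−q/(α−1)} z(t)^β for all t ∈ (0,T). Then: (i) if β ≤ 1, z is bounded on [0,T); and (ii) if β > 1 and z(0)^{1−β} > ((β−1)(α−1)C/(α−1−q)) · T^{(α−1−q)/(α−1)}, then z is bounded on [0,T). -/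
open Real Set

/-- Helper: if `g` is continuous on `[0,T)` and has nonpositive derivative on `(0,T)`,
then `g t ≤ g 0` on `[0,T)`. -/
lemma mono_aux12 {T : ℝ} (hT : 0 < T) (g : ℝ → ℝ)
    (hc : ∀ t ∈ Ico (0:ℝ) T, ContinuousAt g t)
    (hd : ∀ t ∈ Ioo (0:ℝ) T, ∃ d ≤ 0, HasDerivAt g d t) :
    ∀ t ∈ Ico (0:ℝ) T, g t ≤ g 0 := by
  have hint : interior (Ico (0:ℝ) T) = Ioo 0 T := interior_Ico
  have hanti : AntitoneOn g (Ico 0 T) := by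
    apply antitoneOn_of_deriv_nonpos (convex_Ico 0 T)
    · exact fun t ht => (hc t ht).continuousWithinAt
    · rw [hint]
      intro t ht
      obtain ⟨d, _, hdd⟩ := hd t ht
      exact hdd.differentiableAt.differentiableWithinAt
    · rw [hint]
      intro t ht
      obtain ⟨d, hd0, hdd⟩ := hd t ht
      rw [hdd.deriv]; exact hd0
  intro t ht
  exact hanti ⟨le_refl 0, hT⟩ ht ht.1

/-- ODE lemma: if `α > 1 + q` and `z > 0` satisfies
`z' ≤ C (T-t)^(-q/(α-1)) z^β` on `(0,T)`, then `z` is bounded on `[0,T)` provided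
either `β ≤ 1`, or `β > 1` and `z(0)^(1-β)` is large enough. -/
theorem stmt12 (α q C T β : ℝ) (hαq : 1 + q < α) (hq : 0 < q) (hC : 0 < C)
    (hT : 0 < T) (hβ : 0 < β) (z : ℝ → ℝ)
    (hdiff : ∀ t ∈ Ico (0:ℝ) T, DifferentiableAt ℝ z t)
    (hpos : ∀ t ∈ Ico (0:ℝ) T, 0 < z t)
    (hineq : ∀ t ∈ Ioo (0:ℝ) T, deriv z t ≤ C * (T - t) ^ (-(q / (α - 1))) * z t ^ β) :
    (β ≤ 1 → ∃ M : ℝ, ∀ t ∈ Ico (0:ℝ) T, z t ≤ M) ∧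
    (1 < β →
      ((β - 1) * (α - 1) * C / (α - 1 - q)) * T ^ ((α - 1 - q) / (α - 1)) < z 0 ^ (1 - β) →
      ∃ M : ℝ, ∀ t ∈ Ico (0:ℝ) T, z t ≤ M) := by
  have hα1 : (0:ℝ) < α - 1 := by linarith
  set γ : ℝ := q / (α - 1) with hγdef
  have hγ0 : 0 < γ := div_pos hq hα1
  have hγ1 : γ < 1 := (div_lt_one hα1).2 (by linarith)
  have h1γ : (0:ℝ) < 1 - γ := by linarith
  set F : ℝ → ℝ := fun t => C / (1 - γ) * (T ^ (1 - γ) - (T - t) ^ (1 - γ)) with hFdef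
  set K : ℝ := C / (1 - γ) * T ^ (1 - γ) with hKdef
  -- derivative of F
  have hF' : ∀ t ∈ Ioo (0:ℝ) T, HasDerivAt F (C * (T - t) ^ (-γ)) t := by
    intro t ht
    have hTt : (0:ℝ) < T - t := sub_pos.2 ht.2
    have h1 : HasDerivAt (fun s : ℝ => T - s) (-1) t := (hasDerivAt_id t).const_sub T
    have h2 : HasDerivAt (fun x : ℝ => x ^ (1 - γ)) ((1 - γ) * (T - t) ^ (1 - γ - 1)) (T - t) :=
      Real.hasDerivAt_rpow_const (Or.inl (ne_of_gt hTt))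
    have h3 : HasDerivAt (fun s : ℝ => (T - s) ^ (1 - γ))
        ((1 - γ) * (T - t) ^ (1 - γ - 1) * (-1)) t := h2.comp t h1
    have h4 : HasDerivAt F
        (C / (1 - γ) * (0 - (1 - γ) * (T - t) ^ (1 - γ - 1) * (-1))) t :=
      ((hasDerivAt_const t (T ^ (1 - γ))).sub h3).const_mul (C / (1 - γ))
    convert h4 using 1
    have hexp : (1 - γ - 1 : ℝ) = -γ := by ring
    rw [hexp]
    field_simp
    ring
  -- continuity of F on [0,T)
  have hFc : ∀ t ∈ Ico (0:ℝ) T, ContinuousAt F t := by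
    intro t ht
    apply ContinuousAt.mul continuousAt_const
    apply ContinuousAt.sub continuousAt_const
    exact (Real.continuousAt_rpow_const _ _ (Or.inr h1γ.le)).comp
      ((continuous_const.sub continuous_id).continuousAt)
  have hF0 : F 0 = 0 := by simp [hFdef]
  have hFK : ∀ t ∈ Ico (0:ℝ) T, F t ≤ K := by
    intro t ht
    have h1 : (0:ℝ) ≤ (T - t) ^ (1 - γ) := Real.rpow_nonneg (by linarith [ht.2]) _
    have h2 : (0:ℝ) < C / (1 - γ) := div_pos hC h1γ
    rw [hFdef, hKdef]
    dsimp only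
    nlinarith
  have hKpos : 0 < K := by
    rw [hKdef]
    exact mul_pos (div_pos hC h1γ) (Real.rpow_pos_of_pos hT _)
  constructor
  · -- case β ≤ 1
    intro hβ1
    -- z^β ≤ 1 + z
    have hzb : ∀ t ∈ Ico (0:ℝ) T, z t ^ β ≤ 1 + z t := by
      intro t ht
      have hz := hpos t ht
      rcases le_or_gt (z t) 1 with h | h
      · have : z t ^ β ≤ 1 := Real.rpow_le_one hz.le h hβ.le
        linarith
      · have : z t ^ β ≤ z t ^ (1:ℝ) :=
          Real.rpow_le_rpow_of_exponent_le h.le hβ1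
        rw [Real.rpow_one] at this
        linarith
    set g : ℝ → ℝ := fun t => Real.log (1 + z t) - F t with hgdef
    have hg : ∀ t ∈ Ico (0:ℝ) T, g t ≤ g 0 := by
      apply mono_aux12 hT
      · intro t ht
        have hz := hpos t ht
        exact ((Real.continuousAt_log (ne_of_gt (by show (0:ℝ) < 1 + z t; linarith))).comp
          ((continuousAt_const).add (hdiff t ht).continuousAt)).sub (hFc t ht)
      · intro t ht
        have ht' : t ∈ Ico (0:ℝ) T := ⟨ht.1.le, ht.2⟩
        have hz := hpos t ht'
        have hz1 : (0:ℝ) < 1 + z t := by linarith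
        have hzd := (hdiff t ht').hasDerivAt
        have hlog : HasDerivAt (fun s => Real.log (1 + z s))
            ((1 + z t)⁻¹ * (0 + deriv z t)) t :=
          by have := (Real.hasDerivAt_log (ne_of_gt hz1)).comp t ((hasDerivAt_const t 1).add hzd); exact this
        refine ⟨(1 + z t)⁻¹ * (0 + deriv z t) - C * (T - t) ^ (-γ), ?_,
          hlog.sub (hF' t ht)⟩
        have hcoef : (0:ℝ) ≤ C * (T - t) ^ (-γ) :=
          mul_nonneg hC.le (Real.rpow_nonneg (by linarith [ht.2]) _)
        have h1 : deriv z t ≤ C * (T - t) ^ (-γ) * (1 + z t) := by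
          calc deriv z t ≤ C * (T - t) ^ (-(q / (α - 1))) * z t ^ β := hineq t ht
            _ ≤ C * (T - t) ^ (-γ) * (1 + z t) :=
              mul_le_mul_of_nonneg_left (hzb t ht') hcoef
        rw [zero_add, sub_nonpos, inv_mul_le_iff₀ hz1]
        linarith [h1]
    refine ⟨Real.exp (Real.log (1 + z 0) + K), ?_⟩
    intro t ht
    have hz := hpos t ht
    have hz0 := hpos 0 ⟨le_refl 0, hT⟩
    have h1 : Real.log (1 + z t) ≤ Real.log (1 + z 0) + F t := by
      have := hg t ht
      rw [hgdef] at this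
      dsimp only at this
      rw [hF0] at this
      linarith
    have h2 : Real.log (1 + z t) ≤ Real.log (1 + z 0) + K := by
      linarith [hFK t ht]
    have h3 : 1 + z t = Real.exp (Real.log (1 + z t)) :=
      (Real.exp_log (by linarith)).symm
    have h4 : Real.exp (Real.log (1 + z t)) ≤ Real.exp (Real.log (1 + z 0) + K) :=
      Real.exp_le_exp.2 h2
    linarith [h3 ▸ h4]
  · -- case β > 1
    intro hβ1 hsmall
    have h1β : (1 - β : ℝ) < 0 := by linarith
    have h1βne : (1 - β : ℝ) ≠ 0 := ne_of_lt h1β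
    set g : ℝ → ℝ := fun t => z t ^ (1 - β) / (1 - β) - F t with hgdef
    have hg : ∀ t ∈ Ico (0:ℝ) T, g t ≤ g 0 := by
      apply mono_aux12 hT
      · intro t ht
        have hz := hpos t ht
        exact (((Real.continuousAt_rpow_const _ _ (Or.inl (ne_of_gt hz))).comp
          (hdiff t ht).continuousAt).div_const _).sub (hFc t ht)
      · intro t ht
        have ht' : t ∈ Ico (0:ℝ) T := ⟨ht.1.le, ht.2⟩
        have hz := hpos t ht'
        have hzd := (hdiff t ht').hasDerivAt
        have hrp : HasDerivAt (fun s => z s ^ (1 - β))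
            ((1 - β) * z t ^ (1 - β - 1) * deriv z t) t :=
          (Real.hasDerivAt_rpow_const (Or.inl (ne_of_gt hz))).comp t hzd
        refine ⟨(1 - β) * z t ^ (1 - β - 1) * deriv z t / (1 - β) - C * (T - t) ^ (-γ), ?_,
          (hrp.div_const _).sub (hF' t ht)⟩
        have hsimp : (1 - β) * z t ^ (1 - β - 1) * deriv z t / (1 - β)
            = z t ^ (1 - β - 1) * deriv z t := by
          field_simp
        rw [sub_nonpos, hsimp]
        have hexp : (1 - β - 1 : ℝ) = -β := by ring
        rw [hexp]
        have hzb : (0:ℝ) < z t ^ (-β) := Real.rpow_pos_of_pos hz _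
        calc z t ^ (-β) * deriv z t
            ≤ z t ^ (-β) * (C * (T - t) ^ (-(q / (α - 1))) * z t ^ β) :=
              mul_le_mul_of_nonneg_left (hineq t ht) hzb.le
          _ = C * (T - t) ^ (-γ) * (z t ^ (-β) * z t ^ β) := by ring
          _ = C * (T - t) ^ (-γ) := by
              rw [← Real.rpow_add hz, neg_add_cancel, Real.rpow_zero, mul_one]
    -- K equals the constant in the hypothesis divided by (β-1)
    have hKeq : (β - 1) * K = ((β - 1) * (α - 1) * C / (α - 1 - q)) *
        T ^ ((α - 1 - q) / (α - 1)) := by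
      have h1 : (1 - γ : ℝ) = (α - 1 - q) / (α - 1) := by
        rw [hγdef]; field_simp
      rw [hKdef, h1]
      have hne : (α - 1 - q : ℝ) ≠ 0 := by intro h; nlinarith
      field_simp
    set c : ℝ := z 0 ^ (1 - β) - (β - 1) * K with hcdef
    have hcpos : 0 < c := by rw [hcdef, hKeq]; linarith
    refine ⟨c ^ (1 / (1 - β)), ?_⟩
    intro t ht
    have hz := hpos t ht
    have hz0 := hpos 0 ⟨le_refl 0, hT⟩
    -- from monotonicity: z t ^ (1-β) / (1-β) ≤ z 0 ^ (1-β)/(1-β) + F t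
    have h1 : z t ^ (1 - β) / (1 - β) ≤ z 0 ^ (1 - β) / (1 - β) + F t := by
      have := hg t ht
      rw [hgdef] at this
      dsimp only at this
      rw [hF0] at this
      linarith
    have h2 : z t ^ (1 - β) / (1 - β) ≤ z 0 ^ (1 - β) / (1 - β) + K :=
      le_trans h1 (by linarith [hFK t ht])
    -- multiply by (1-β) < 0
    have h3 : c ≤ z t ^ (1 - β) := by
      have := mul_le_mul_of_nonpos_left h2 h1β.le
      rw [mul_add, mul_div_cancel₀ _ h1βne, mul_div_cancel₀ _ h1βne] at this
      rw [hcdef]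
      nlinarith
    -- apply antitone rpow
    have h5 : (z t ^ (1 - β)) ^ (1 / (1 - β)) ≤ c ^ (1 / (1 - β)) :=
      Real.rpow_le_rpow_of_nonpos hcpos h3 (le_of_lt (div_neg_of_pos_of_neg one_pos h1β))
    rwa [← Real.rpow_mul hz.le, mul_one_div, div_self h1βne, Real.rpow_one] at h5
end

section
/- Let α > 1, C > 0, a ≥ 0 and T > 0, and define w(t) = e^{−a t} ((α−1) C (T−t))^{−1/(α−1)} for t ∈ [0,T). Then w is differentiable on [0,T), w(t) → +∞ as t → T^-, and w'(t) ≥ C w(t)^α − a w(t) for all t ∈ [0,T). -/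
open Real Set Filter Topology

lemma stmt18_hasDeriv (α C a T : ℝ) (hα : 1 < α) (hC : 0 < C) (t : ℝ) (ht : t < T) :
    HasDerivAt (fun s : ℝ => Real.exp (-a * s) * ((α - 1) * C * (T - s)) ^ (-(1 / (α - 1))))
      (-a * (Real.exp (-a * t) * ((α - 1) * C * (T - t)) ^ (-(1 / (α - 1)))) +
        Real.exp (-a * t) * (C * ((α - 1) * C * (T - t)) ^ (-(1 / (α - 1)) - 1))) t := by
  have hα1 : (0:ℝ) < α - 1 := by linarith
  have hTt : 0 < T - t := by linarith
  have hg : 0 < (α - 1) * C * (T - t) := by positivity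
  have h1 : HasDerivAt (fun s : ℝ => -a * s) (-a) t := by
    simpa using (hasDerivAt_id t).const_mul (-a)
  have hE : HasDerivAt (fun s : ℝ => Real.exp (-a * s)) (Real.exp (-a * t) * (-a)) t := h1.exp
  have h2 : HasDerivAt (fun s : ℝ => (α - 1) * C * (T - s)) (-((α - 1) * C)) t := by
    simpa using ((hasDerivAt_id t).const_sub T).const_mul ((α - 1) * C)
  have h3 := h2.rpow_const (p := -(1 / (α - 1))) (Or.inl hg.ne')
  have key := hE.mul h3
  refine key.congr_deriv ?_
  have hc : -((α - 1) * C) * (-(1 / (α - 1))) = C := by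
    field_simp
  rw [hc]
  ring

/-- The function `w(t) = e^(-a t) ((α-1) C (T-t))^(-1/(α-1))` is differentiable on
`[0,T)`, tends to `+∞` as `t → T⁻`, and satisfies `w' ≥ C w^α - a w` there. -/
theorem stmt18 (α C a T : ℝ) (hα : 1 < α) (hC : 0 < C) (ha : 0 ≤ a) (hT : 0 < T) :
    (∀ t ∈ Ico (0:ℝ) T, DifferentiableAt ℝ
      (fun s : ℝ => Real.exp (-a * s) * ((α - 1) * C * (T - s)) ^ (-(1 / (α - 1)))) t) ∧
    Tendsto (fun t : ℝ => Real.exp (-a * t) * ((α - 1) * C * (T - t)) ^ (-(1 / (α - 1))))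
      (𝓝[<] T) atTop ∧
    ∀ t ∈ Ico (0:ℝ) T,
      C * (Real.exp (-a * t) * ((α - 1) * C * (T - t)) ^ (-(1 / (α - 1)))) ^ α -
          a * (Real.exp (-a * t) * ((α - 1) * C * (T - t)) ^ (-(1 / (α - 1)))) ≤
        deriv (fun s : ℝ =>
          Real.exp (-a * s) * ((α - 1) * C * (T - s)) ^ (-(1 / (α - 1)))) t := by
  have hα1 : (0:ℝ) < α - 1 := by linarith
  refine ⟨?_, ?_, ?_⟩
  · intro t ht
    exact (stmt18_hasDeriv α C a T hα hC t ht.2).differentiableAt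
  · -- Tendsto atTop
    have hE : Tendsto (fun t : ℝ => Real.exp (-a * t)) (𝓝[<] T) (𝓝 (Real.exp (-a * T))) :=
      ((Real.continuous_exp.comp (continuous_const.mul continuous_id)).tendsto T).mono_left
        nhdsWithin_le_nhds
    have hgpos : Tendsto (fun t : ℝ => (α - 1) * C * (T - t)) (𝓝[<] T) (𝓝[>] 0) := by
      apply tendsto_nhdsWithin_of_tendsto_nhds_of_eventually_within
      · have : Tendsto (fun t : ℝ => (α - 1) * C * (T - t)) (𝓝 T) (𝓝 ((α - 1) * C * (T - T))) :=
          (continuous_const.mul (continuous_const.sub continuous_id)).tendsto T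
        simpa using this.mono_left nhdsWithin_le_nhds
      · filter_upwards [self_mem_nhdsWithin] with t (ht : t < T)
        have h1 : (0:ℝ) < α - 1 := hα1
        have h2 : 0 < T - t := by linarith
        exact mem_Ioi.mpr (by positivity)
    have hpow : Tendsto (fun x : ℝ => x ^ (-(1 / (α - 1)))) (𝓝[>] 0) atTop := by
      have h1 : Tendsto (fun x : ℝ => x ^ (1 / (α - 1))) (𝓝[>] 0) (𝓝[>] 0) := by
        apply tendsto_nhdsWithin_of_tendsto_nhds_of_eventually_within
        · have := (Real.continuousAt_rpow_const 0 (1 / (α - 1))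
            (Or.inr (by positivity))).tendsto
          simpa [one_div, Real.zero_rpow (show ((α - 1):ℝ)⁻¹ ≠ 0 by positivity)] using
            this.mono_left nhdsWithin_le_nhds
        · filter_upwards [self_mem_nhdsWithin] with x (hx : 0 < x)
          exact Real.rpow_pos_of_pos hx _
      have h2 : Tendsto (fun y : ℝ => y⁻¹) (𝓝[>] 0) atTop := tendsto_inv_nhdsGT_zero
      have := h2.comp h1
      refine this.congr' ?_
      filter_upwards [self_mem_nhdsWithin] with x (hx : 0 < x)
      simp [Function.comp, Real.rpow_neg hx.le]
    have := hE.pos_mul_atTop (Real.exp_pos _) (hpow.comp hgpos)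
    exact this
  · intro t ht
    obtain ⟨ht0, htT⟩ := ht
    have hg : 0 < (α - 1) * C * (T - t) := by
      have : 0 < T - t := by linarith
      positivity
    rw [(stmt18_hasDeriv α C a T hα hC t htT).deriv]
    set G := (α - 1) * C * (T - t) with hG
    set p := -(1 / (α - 1)) with hp
    have hEpos : 0 < Real.exp (-a * t) := Real.exp_pos _
    -- (E * G^p)^α = exp(-a*t*α) * G^(p-1)
    have hpα : p * α = p - 1 := by
      rw [hp]; field_simp; ring
    have hwα : (Real.exp (-a * t) * G ^ p) ^ α
        = Real.exp (-a * t * α) * G ^ (p - 1) := by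
      rw [Real.mul_rpow hEpos.le (Real.rpow_pos_of_pos hg p).le, ← Real.exp_mul,
        ← Real.rpow_mul hg.le, hpα]
    rw [hwα]
    have hexp : Real.exp (-a * t * α) ≤ Real.exp (-a * t) := by
      apply Real.exp_le_exp.mpr
      nlinarith [mul_nonneg (mul_nonneg ha ht0) hα1.le]
    have hGp : (0:ℝ) ≤ G ^ (p - 1) := (Real.rpow_pos_of_pos hg _).le
    have key : C * (Real.exp (-a * t * α) * G ^ (p - 1))
        ≤ Real.exp (-a * t) * (C * G ^ (p - 1)) := by
      nlinarith [mul_le_mul_of_nonneg_right hexp hGp, mul_le_mul_of_nonneg_left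
        (mul_le_mul_of_nonneg_right hexp hGp) hC.le]
    linarith
end
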